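/- arXiv:2505.08062 — 5 statements merged into one kernel-verified Lean document; each statement's English description precedes it below -/
import Mathlib

section
/- Let H be a separable Hilbert space and let (K_n) and K be non-negative, self-adjoint trace-class operators on H. If the Hilbert–Schmidt norm ‖√K_n − √K‖₂ tends to 0, then the trace norm ‖K_n − K‖₁ tends to 0. -/
set_option maxHeartbeats 1000000
set_option synthInstance.maxHeartbeats 400000


open Filter MeasureTheory
open scoped ENNReal

/-- The trace norm `‖T‖₁` of a bounded operator, defined as the supremum over finite
orthonormal families `e, f` of `∑ i, |⟪T e_i, f_i⟫|`, valued in `[0,∞]`. -/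
noncomputable def traceNorm {H : Type*} [NormedAddCommGroup H] [InnerProductSpace ℝ H]
    (T : H →L[ℝ] H) : ℝ≥0∞ :=
  ⨆ (n : ℕ) (e : Fin n → H) (f : Fin n → H) (_ : Orthonormal ℝ e)
    (_ : Orthonormal ℝ f), ∑ i, (‖(inner ℝ (T (e i)) (f i) : ℝ)‖₊ : ℝ≥0∞)

/-- The Hilbert–Schmidt norm `‖T‖₂`, defined as the square root of the supremum over finite
orthonormal families `e` of `∑ i, ‖T e_i‖²`, valued in `[0,∞]`. -/
noncomputable def hsNorm {H : Type*} [NormedAddCommGroup H] [InnerProductSpace ℝ H]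
    (T : H →L[ℝ] H) : ℝ≥0∞ :=
  (⨆ (n : ℕ) (e : Fin n → H) (_ : Orthonormal ℝ e),
    ∑ i, (‖T (e i)‖₊ : ℝ≥0∞) ^ 2) ^ (1 / 2 : ℝ)

section Aux

variable {H : Type*} [NormedAddCommGroup H] [InnerProductSpace ℝ H]

lemma aux_rpow_half_le_iff (x c : ℝ≥0∞) : x ^ (1 / 2 : ℝ) ≤ c ↔ x ≤ c ^ 2 := by
  rw [← ENNReal.rpow_le_rpow_iff (show (0:ℝ) < 2 by norm_num) (x := x ^ (1 / 2 : ℝ)),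
    ← ENNReal.rpow_mul, show (1 / 2 : ℝ) * 2 = 1 by norm_num, ENNReal.rpow_one,
    ENNReal.rpow_two]

lemma aux_sum_le_traceNorm (T : H →L[ℝ] H) {n : ℕ} {e f : Fin n → H}
    (he : Orthonormal ℝ e) (hf : Orthonormal ℝ f) :
    ∑ i, (‖(inner ℝ (T (e i)) (f i) : ℝ)‖₊ : ℝ≥0∞) ≤ traceNorm T :=
  le_iSup_of_le n <| le_iSup_of_le e <| le_iSup_of_le f <|
    le_iSup_of_le he <| le_iSup_of_le hf le_rfl

lemma aux_traceNorm_le_iff (T : H →L[ℝ] H) (c : ℝ≥0∞) :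
    traceNorm T ≤ c ↔ ∀ (n : ℕ) (e f : Fin n → H), Orthonormal ℝ e → Orthonormal ℝ f →
      ∑ i, (‖(inner ℝ (T (e i)) (f i) : ℝ)‖₊ : ℝ≥0∞) ≤ c := by
  simp [traceNorm, iSup_le_iff]

lemma aux_sum_sq_le (T : H →L[ℝ] H) {n : ℕ} {e : Fin n → H} (he : Orthonormal ℝ e) :
    ∑ i, (‖T (e i)‖₊ : ℝ≥0∞) ^ 2 ≤ hsNorm T ^ 2 := by
  rw [← ENNReal.rpow_two, hsNorm, ← ENNReal.rpow_mul, show (1 / 2 : ℝ) * 2 = 1 by norm_num, ENNReal.rpow_one]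
  exact le_iSup_of_le n <| le_iSup_of_le e <| le_iSup_of_le he le_rfl

lemma aux_hsNorm_le_iff (T : H →L[ℝ] H) (c : ℝ≥0∞) :
    hsNorm T ≤ c ↔ ∀ (n : ℕ) (e : Fin n → H), Orthonormal ℝ e →
      ∑ i, (‖T (e i)‖₊ : ℝ≥0∞) ^ 2 ≤ c ^ 2 := by
  rw [hsNorm, aux_rpow_half_le_iff]
  simp [iSup_le_iff]

lemma aux_traceNorm_add_le (S T : H →L[ℝ] H) :
    traceNorm (S + T) ≤ traceNorm S + traceNorm T := by
  rw [aux_traceNorm_le_iff]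
  intro n e f he hf
  have h1 : ∀ i : Fin n, (‖(inner ℝ ((S + T) (e i)) (f i) : ℝ)‖₊ : ℝ≥0∞) ≤
      (‖(inner ℝ (S (e i)) (f i) : ℝ)‖₊ : ℝ≥0∞) + (‖(inner ℝ (T (e i)) (f i) : ℝ)‖₊ : ℝ≥0∞) := by
    intro i
    rw [ContinuousLinearMap.add_apply, inner_add_left]
    exact_mod_cast nnnorm_add_le _ _
  calc ∑ i, (‖(inner ℝ ((S + T) (e i)) (f i) : ℝ)‖₊ : ℝ≥0∞)
      ≤ ∑ i, ((‖(inner ℝ (S (e i)) (f i) : ℝ)‖₊ : ℝ≥0∞) +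
          (‖(inner ℝ (T (e i)) (f i) : ℝ)‖₊ : ℝ≥0∞)) := Finset.sum_le_sum fun i _ => h1 i
    _ = (∑ i, (‖(inner ℝ (S (e i)) (f i) : ℝ)‖₊ : ℝ≥0∞)) +
          ∑ i, (‖(inner ℝ (T (e i)) (f i) : ℝ)‖₊ : ℝ≥0∞) := Finset.sum_add_distrib
    _ ≤ traceNorm S + traceNorm T :=
        add_le_add (aux_sum_le_traceNorm S he hf) (aux_sum_le_traceNorm T he hf)

lemma aux_hsNorm_add_le (A B : H →L[ℝ] H) :
    hsNorm (A + B) ≤ hsNorm A + hsNorm B := by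
  rw [aux_hsNorm_le_iff]
  intro n e he
  rw [← aux_rpow_half_le_iff]
  have h1 : ∀ i : Fin n, (‖(A + B) (e i)‖₊ : ℝ≥0∞) ≤ ‖A (e i)‖₊ + ‖B (e i)‖₊ := by
    intro i
    rw [ContinuousLinearMap.add_apply]
    exact_mod_cast nnnorm_add_le _ _
  calc (∑ i, (‖(A + B) (e i)‖₊ : ℝ≥0∞) ^ 2) ^ (1 / 2 : ℝ)
      ≤ (∑ i, ((‖A (e i)‖₊ : ℝ≥0∞) + ‖B (e i)‖₊) ^ (2 : ℝ)) ^ (1 / 2 : ℝ) := by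
        refine ENNReal.rpow_le_rpow (Finset.sum_le_sum fun i _ => ?_) (by norm_num)
        rw [ENNReal.rpow_two]
        exact pow_le_pow_left' (h1 i) 2
    _ ≤ (∑ i, (‖A (e i)‖₊ : ℝ≥0∞) ^ (2 : ℝ)) ^ (1 / 2 : ℝ) +
          (∑ i, (‖B (e i)‖₊ : ℝ≥0∞) ^ (2 : ℝ)) ^ (1 / 2 : ℝ) :=
        ENNReal.Lp_add_le Finset.univ _ _ (by norm_num)
    _ ≤ hsNorm A + hsNorm B := by
        refine add_le_add ?_ ?_ <;>
        · rw [aux_rpow_half_le_iff]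
          simp only [ENNReal.rpow_two]
          exact aux_sum_sq_le _ he

lemma aux_traceNorm_comp_le (A B : H →L[ℝ] H)
    (hA : ∀ x y : H, (inner ℝ (A x) y : ℝ) = inner ℝ x (A y)) :
    traceNorm (A.comp B) ≤ hsNorm A * hsNorm B := by
  rw [aux_traceNorm_le_iff]
  intro n e f he hf
  have key : ∀ i : Fin n, (‖(inner ℝ ((A.comp B) (e i)) (f i) : ℝ)‖₊ : ℝ≥0∞) ≤
      (‖B (e i)‖₊ : ℝ≥0∞) * ‖A (f i)‖₊ := by
    intro i
    rw [ContinuousLinearMap.comp_apply, hA]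
    exact_mod_cast nnnorm_inner_le_nnnorm (𝕜 := ℝ) _ _
  calc ∑ i, (‖(inner ℝ ((A.comp B) (e i)) (f i) : ℝ)‖₊ : ℝ≥0∞)
      ≤ ∑ i, (‖B (e i)‖₊ : ℝ≥0∞) * ‖A (f i)‖₊ := Finset.sum_le_sum fun i _ => key i
    _ ≤ (∑ i, (‖B (e i)‖₊ : ℝ≥0∞) ^ (2 : ℝ)) ^ (1 / 2 : ℝ) *
          (∑ i, (‖A (f i)‖₊ : ℝ≥0∞) ^ (2 : ℝ)) ^ (1 / 2 : ℝ) :=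
        ENNReal.inner_le_Lp_mul_Lq Finset.univ _ _ ⟨by norm_num, by norm_num, by norm_num⟩
    _ ≤ hsNorm B * hsNorm A := by
        refine mul_le_mul' ?_ ?_
        · rw [aux_rpow_half_le_iff]
          simp only [ENNReal.rpow_two]
          exact aux_sum_sq_le _ he
        · rw [aux_rpow_half_le_iff]
          simp only [ENNReal.rpow_two]
          exact aux_sum_sq_le _ hf
    _ = hsNorm A * hsNorm B := mul_comm _ _

lemma aux_hsNorm_sqrt_le (K R : H →L[ℝ] H)
    (hRsym : ∀ x y : H, (inner ℝ (R x) y : ℝ) = inner ℝ x (R y)) (hsq : R.comp R = K) :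
    hsNorm R ≤ traceNorm K ^ (1 / 2 : ℝ) := by
  rw [aux_hsNorm_le_iff]
  intro n e he
  have h2 : (traceNorm K ^ (1 / 2 : ℝ)) ^ 2 = traceNorm K := by
    rw [← ENNReal.rpow_two, ← ENNReal.rpow_mul, show (1 / 2 : ℝ) * 2 = 1 by norm_num,
      ENNReal.rpow_one]
  rw [h2]
  have key : ∀ i : Fin n, (‖R (e i)‖₊ : ℝ≥0∞) ^ 2 = ‖(inner ℝ (K (e i)) (e i) : ℝ)‖₊ := by
    intro i
    have h3 : (inner ℝ (K (e i)) (e i) : ℝ) = inner ℝ (R (e i)) (R (e i)) := by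
      rw [← hsq, ContinuousLinearMap.comp_apply, hRsym]
    have h4 : (inner ℝ (K (e i)) (e i) : ℝ) = ‖R (e i)‖ ^ 2 := by
      rw [h3, real_inner_self_eq_norm_sq]
    have h5 : ‖(inner ℝ (K (e i)) (e i) : ℝ)‖₊ = ‖R (e i)‖₊ ^ 2 := by
      apply NNReal.coe_injective
      simp only [coe_nnnorm, NNReal.coe_pow, h4, Real.norm_eq_abs]
      exact abs_of_nonneg (by positivity)
    rw [h5]
    push_cast
    ring
  calc ∑ i, (‖R (e i)‖₊ : ℝ≥0∞) ^ 2
      = ∑ i, (‖(inner ℝ (K (e i)) (e i) : ℝ)‖₊ : ℝ≥0∞) := by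
        refine Finset.sum_congr rfl fun i _ => ?_
        rw [key i]
    _ ≤ traceNorm K := aux_sum_le_traceNorm K he he

end Aux

/-- If `K n, Kinf` are non-negative self-adjoint trace-class operators on a separable Hilbert
space and the Hilbert–Schmidt norm `‖√(K n) − √Kinf‖₂ → 0`, then the trace norm
`‖K n − Kinf‖₁ → 0`. Here `R n` (resp. `Rinf`) is the unique non-negative self-adjoint
square root of `K n` (resp. `Kinf`). -/
theorem traceNorm_tendsto_of_hsNorm_sqrt_tendsto
    {H : Type*} [NormedAddCommGroup H] [InnerProductSpace ℝ H] [CompleteSpace H]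
    [SecondCountableTopology H]
    (K : ℕ → H →L[ℝ] H) (Kinf : H →L[ℝ] H) (R : ℕ → H →L[ℝ] H) (Rinf : H →L[ℝ] H)
    (hK : ∀ n, (K n).IsPositive) (hKinf : Kinf.IsPositive)
    (hKtc : ∀ n, traceNorm (K n) ≠ ⊤) (hKinftc : traceNorm Kinf ≠ ⊤)
    (hR : ∀ n, (R n).IsPositive) (hRinf : Rinf.IsPositive)
    (hRsq : ∀ n, (R n).comp (R n) = K n) (hRinfsq : Rinf.comp Rinf = Kinf)
    (hconv : Tendsto (fun n => hsNorm (R n - Rinf)) atTop (nhds 0)) :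
    Tendsto (fun n => traceNorm (K n - Kinf)) atTop (nhds 0) := by
  set d : ℕ → ℝ≥0∞ := fun n => hsNorm (R n - Rinf) with hd
  set c : ℝ≥0∞ := hsNorm Rinf with hc
  -- symmetry facts
  have hRsym : ∀ n, ∀ x y : H, (inner ℝ ((R n) x) y : ℝ) = inner ℝ x ((R n) y) := fun n =>
    (hR n).isSelfAdjoint.isSymmetric
  have hRinfsym : ∀ x y : H, (inner ℝ (Rinf x) y : ℝ) = inner ℝ x (Rinf y) :=
    hRinf.isSelfAdjoint.isSymmetric
  have hDsym : ∀ n, ∀ x y : H, (inner ℝ ((R n - Rinf) x) y : ℝ) = inner ℝ x ((R n - Rinf) y) :=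
    fun n => ((hR n).isSelfAdjoint.sub hRinf.isSelfAdjoint).isSymmetric
  -- c is finite
  have hcfin : c ≠ ⊤ := by
    have := aux_hsNorm_sqrt_le Kinf Rinf hRinfsym hRinfsq
    exact ne_top_of_le_ne_top (ENNReal.rpow_ne_top_of_nonneg (by norm_num) hKinftc) this
  -- the key bound
  have bound : ∀ n, traceNorm (K n - Kinf) ≤ d n * (d n + (c + c)) := by
    intro n
    have hsplit : K n - Kinf = (R n).comp (R n - Rinf) + (R n - Rinf).comp Rinf := by
      rw [← hRsq n, ← hRinfsq]
      ext x
      simp only [ContinuousLinearMap.sub_apply, ContinuousLinearMap.add_apply,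
        ContinuousLinearMap.comp_apply, map_sub]
      abel
    have h1 : traceNorm ((R n).comp (R n - Rinf)) ≤ hsNorm (R n) * d n :=
      aux_traceNorm_comp_le _ _ (hRsym n)
    have h2 : traceNorm ((R n - Rinf).comp Rinf) ≤ d n * c :=
      aux_traceNorm_comp_le _ _ (hDsym n)
    have h3 : hsNorm (R n) ≤ d n + c := by
      have heq : (R n - Rinf) + Rinf = R n := sub_add_cancel _ _
      calc hsNorm (R n) = hsNorm ((R n - Rinf) + Rinf) := by rw [heq]
        _ ≤ d n + c := aux_hsNorm_add_le _ _
    calc traceNorm (K n - Kinf)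
        ≤ traceNorm ((R n).comp (R n - Rinf)) + traceNorm ((R n - Rinf).comp Rinf) := by
          rw [hsplit]; exact aux_traceNorm_add_le _ _
      _ ≤ hsNorm (R n) * d n + d n * c := add_le_add h1 h2
      _ ≤ (d n + c) * d n + d n * c := add_le_add_left (mul_le_mul_left h3 _) _
      _ = d n * (d n + (c + c)) := by ring
  -- the upper bound tends to 0
  have hupper : Tendsto (fun n => d n * (d n + (c + c))) atTop (nhds 0) := by
    have h2 : Tendsto (fun n => d n + (c + c)) atTop (nhds (0 + (c + c))) :=
      hconv.add tendsto_const_nhds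
    have hb : (0 : ℝ≥0∞) + (c + c) ≠ ⊤ := by
      simp only [zero_add]
      exact ENNReal.add_ne_top.mpr ⟨hcfin, hcfin⟩
    have := ENNReal.Tendsto.mul hconv (Or.inr hb) h2 (Or.inr (by simp))
    simpa using this
  exact tendsto_of_tendsto_of_tendsto_of_le_of_le tendsto_const_nhds hupper
    (fun n => zero_le) bound
end

section
/- Let H be a separable Hilbert space and let (K_n) and K be non-negative, self-adjoint trace-class operators on H. Then ‖K_n − K‖₁ → 0 if and only if both ‖K_n − K‖₂ → 0 (Hilbert–Schmidt norm) and tr(K_n) → tr(K). -/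
open Filter MeasureTheory
open scoped ENNReal

/-- The trace of a (non-negative) operator, as the supremum over finite orthonormal families
of `∑ i, ⟪T e_i, e_i⟫`, valued in `[0,∞]`. For a non-negative self-adjoint trace-class
operator this is the trace-norm `‖T‖₁`. -/
noncomputable def posTrace {H : Type*} [NormedAddCommGroup H] [InnerProductSpace ℝ H]
    (T : H →L[ℝ] H) : ℝ≥0∞ :=
  ⨆ (n : ℕ) (e : Fin n → H) (_ : Orthonormal ℝ e),
    ∑ i, ENNReal.ofReal (inner ℝ (T (e i)) (e i) : ℝ)

set_option linter.unusedSectionVars false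
set_option maxHeartbeats 1000000
set_option synthInstance.maxHeartbeats 400000

section Aux
variable {H : Type*} [NormedAddCommGroup H] [InnerProductSpace ℝ H] [CompleteSpace H]

local notation "⟪" x ", " y "⟫" => @inner ℝ _ _ x y

theorem sum_le_traceNorm {T : H →L[ℝ] H} {n : ℕ} {e f : Fin n → H}
    (he : Orthonormal ℝ e) (hf : Orthonormal ℝ f) :
    ∑ i, (‖(⟪T (e i), f i⟫ : ℝ)‖₊ : ℝ≥0∞) ≤ traceNorm T :=
  le_iSup_of_le n <| le_iSup_of_le e <| le_iSup_of_le f <|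
    le_iSup_of_le he <| le_iSup_of_le hf le_rfl

theorem ennreal_sum_eq {n : ℕ} (x : Fin n → ℝ) :
    ∑ i, (‖x i‖₊ : ℝ≥0∞) = ENNReal.ofReal (∑ i, |x i|) := by
  rw [ENNReal.ofReal_sum_of_nonneg fun i _ => abs_nonneg _]
  exact Finset.sum_congr rfl fun i _ => Real.enorm_eq_ofReal_abs _

theorem sum_abs_le_traceNorm_toReal {T : H →L[ℝ] H} (hT : traceNorm T ≠ ⊤) {n : ℕ}
    {e f : Fin n → H} (he : Orthonormal ℝ e) (hf : Orthonormal ℝ f) :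
    ∑ i, |(⟪T (e i), f i⟫ : ℝ)| ≤ (traceNorm T).toReal := by
  rw [← ENNReal.ofReal_le_iff_le_toReal hT, ← ennreal_sum_eq]
  exact sum_le_traceNorm he hf

theorem traceNorm_le_ofReal {T : H →L[ℝ] H} {C : ℝ}
    (h : ∀ (n : ℕ) (e f : Fin n → H), Orthonormal ℝ e → Orthonormal ℝ f →
      ∑ i, |(⟪T (e i), f i⟫ : ℝ)| ≤ C) : traceNorm T ≤ ENNReal.ofReal C := by
  refine iSup_le fun n => iSup_le fun e => iSup_le fun f => iSup_le fun he =>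
    iSup_le fun hf => ?_
  rw [ennreal_sum_eq]
  exact ENNReal.ofReal_le_ofReal (h n e f he hf)

theorem sum_le_posTrace {C : H →L[ℝ] H} {n : ℕ} {e : Fin n → H}
    (he : Orthonormal ℝ e) :
    ∑ i, ENNReal.ofReal (⟪C (e i), e i⟫ : ℝ) ≤ posTrace C :=
  le_iSup_of_le n <| le_iSup_of_le e <| le_iSup_of_le he le_rfl

theorem sum_inner_le_posTrace_toReal {C : H →L[ℝ] H} (hC : C.IsPositive)
    (htc : posTrace C ≠ ⊤) {n : ℕ} {e : Fin n → H} (he : Orthonormal ℝ e) :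
    ∑ i, (⟪C (e i), e i⟫ : ℝ) ≤ (posTrace C).toReal := by
  have hnn : ∀ i : Fin n, (0:ℝ) ≤ ⟪C (e i), e i⟫ := fun i => by
    simpa using hC.inner_nonneg_left (e i)
  rw [← ENNReal.ofReal_le_iff_le_toReal htc,
    ENNReal.ofReal_sum_of_nonneg fun i _ => hnn i]
  exact sum_le_posTrace he

theorem posTrace_le_traceNorm (T : H →L[ℝ] H) : posTrace T ≤ traceNorm T := by
  refine iSup_le fun n => iSup_le fun e => iSup_le fun he => ?_
  refine le_trans (Finset.sum_le_sum fun i _ => ?_) (sum_le_traceNorm he he)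
  rw [← enorm_eq_nnnorm, Real.enorm_eq_ofReal_abs]
  exact ENNReal.ofReal_le_ofReal (le_abs_self _)

end Aux
section Aux2
variable {H : Type*} [NormedAddCommGroup H] [InnerProductSpace ℝ H] [CompleteSpace H]

local notation "⟪" x ", " y "⟫" => @inner ℝ _ _ x y

theorem selfadj_inner_symm {A : H →L[ℝ] H} (hA : IsSelfAdjoint A) (x y : H) :
    (⟪A x, y⟫ : ℝ) = ⟪x, A y⟫ :=
  (ContinuousLinearMap.isSelfAdjoint_iff_isSymmetric.mp hA) x y

theorem pos_inner_nonneg {A : H →L[ℝ] H} (hA : A.IsPositive) (x : H) :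
    (0:ℝ) ≤ ⟪A x, x⟫ := by simpa using hA.inner_nonneg_left x

theorem pos_inner_sq_le {A : H →L[ℝ] H} (hA : A.IsPositive) (x y : H) :
    (⟪A x, y⟫ : ℝ) ^ 2 ≤ ⟪A x, x⟫ * ⟪A y, y⟫ := by
  have hsymm : (⟪A y, x⟫ : ℝ) = ⟪A x, y⟫ := by
    rw [selfadj_inner_symm hA.isSelfAdjoint, real_inner_comm]
  have key : ∀ t : ℝ, 0 ≤ ⟪A y, y⟫ * (t * t) + (2 * ⟪A x, y⟫) * t + ⟪A x, x⟫ := by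
    intro t
    have h0 := pos_inner_nonneg hA (x + t • y)
    have expand : (⟪A (x + t • y), x + t • y⟫ : ℝ)
        = ⟪A y, y⟫ * (t * t) + (2 * ⟪A x, y⟫) * t + ⟪A x, x⟫ := by
      rw [map_add, ContinuousLinearMap.map_smul]
      simp only [inner_add_left, inner_add_right, real_inner_smul_left, real_inner_smul_right]
      rw [hsymm]; ring
    linarith [h0, expand ▸ h0]
  have hd := discrim_le_zero key
  rw [discrim] at hd
  nlinarith [hd]

theorem pos_abs_inner_le {A : H →L[ℝ] H} (hA : A.IsPositive) (x y : H) :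
    |(⟪A x, y⟫ : ℝ)| ≤ Real.sqrt ⟪A x, x⟫ * Real.sqrt ⟪A y, y⟫ := by
  rw [← Real.sqrt_mul (pos_inner_nonneg hA x), ← Real.sqrt_sq_eq_abs]
  exact Real.sqrt_le_sqrt (pos_inner_sq_le hA x y)

theorem pos_sum_abs_inner_le {A : H →L[ℝ] H} (hA : A.IsPositive) {n : ℕ}
    (x y : Fin n → H) :
    ∑ i, |(⟪A (x i), y i⟫ : ℝ)| ≤
      Real.sqrt (∑ i, (⟪A (x i), x i⟫ : ℝ)) * Real.sqrt (∑ i, (⟪A (y i), y i⟫ : ℝ)) := by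
  calc ∑ i, |(⟪A (x i), y i⟫ : ℝ)|
      ≤ ∑ i, Real.sqrt ⟪A (x i), x i⟫ * Real.sqrt ⟪A (y i), y i⟫ :=
        Finset.sum_le_sum fun i _ => pos_abs_inner_le hA _ _
    _ ≤ _ := Real.sum_sqrt_mul_sqrt_le _ (fun i => pos_inner_nonneg hA _)
        (fun i => pos_inner_nonneg hA _)

theorem orthonormal_single {x : H} (hx : ‖x‖ = 1) :
    Orthonormal ℝ (fun _ : Fin 1 => x) := by
  rw [orthonormal_iff_ite]
  intro i j
  simp [Subsingleton.elim i j, real_inner_self_eq_norm_sq, hx]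

theorem norm_apply_le_of_hsNorm_le {T : H →L[ℝ] H} {c : ℝ} (hc : 0 ≤ c)
    (h : hsNorm T ≤ ENNReal.ofReal c) {x : H} (hx : ‖x‖ = 1) : ‖T x‖ ≤ c := by
  have he := orthonormal_single (H := H) hx
  set S : ℝ≥0∞ := ⨆ (n : ℕ) (e : Fin n → H) (_ : Orthonormal ℝ e),
      ∑ i, (‖T (e i)‖₊ : ℝ≥0∞) ^ 2 with hS
  have hsum : (‖T x‖₊ : ℝ≥0∞) ^ 2 ≤ S := by
    calc (‖T x‖₊ : ℝ≥0∞) ^ 2 = ∑ _i : Fin 1, (‖T x‖₊ : ℝ≥0∞) ^ 2 := by simp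
      _ ≤ S := le_iSup_of_le 1 <| le_iSup_of_le (fun _ => x) <| le_iSup_of_le he le_rfl
  have h1 : (‖T x‖₊ : ℝ≥0∞) ≤ hsNorm T := by
    have : (‖T x‖₊ : ℝ≥0∞) = ((‖T x‖₊ : ℝ≥0∞) ^ 2) ^ (1/2 : ℝ) := by
      rw [← ENNReal.rpow_natCast _ 2, ← ENNReal.rpow_mul]; norm_num
    rw [this, hsNorm, ← hS]
    exact ENNReal.rpow_le_rpow hsum (by norm_num)
  have h3 : (‖T x‖₊ : ℝ≥0∞) ≤ ENNReal.ofReal c := h1.trans h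
  rwa [← enorm_eq_nnnorm, ← ofReal_norm, ENNReal.ofReal_le_ofReal_iff hc] at h3

theorem abs_inner_le_of_hsNorm_le {T : H →L[ℝ] H} {c : ℝ} (hc : 0 ≤ c)
    (h : hsNorm T ≤ ENNReal.ofReal c) {x y : H} (hx : ‖x‖ = 1) (hy : ‖y‖ = 1) :
    |(⟪T x, y⟫ : ℝ)| ≤ c := by
  calc |(⟪T x, y⟫ : ℝ)| ≤ ‖T x‖ * ‖y‖ := abs_real_inner_le_norm _ _
    _ = ‖T x‖ := by rw [hy, mul_one]
    _ ≤ c := norm_apply_le_of_hsNorm_le hc h hx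

theorem posTrace_le_posTrace_add_traceNorm {A B : H →L[ℝ] H} (hB : B.IsPositive) :
    posTrace A ≤ posTrace B + traceNorm (A - B) := by
  refine iSup_le fun n => iSup_le fun e => iSup_le fun he => ?_
  calc ∑ i, ENNReal.ofReal (⟪A (e i), e i⟫ : ℝ)
      ≤ ∑ i, (ENNReal.ofReal (⟪B (e i), e i⟫ : ℝ)
          + (‖(⟪(A - B) (e i), e i⟫ : ℝ)‖₊ : ℝ≥0∞)) := by
        refine Finset.sum_le_sum fun i _ => ?_
        have hb : (0:ℝ) ≤ ⟪B (e i), e i⟫ := pos_inner_nonneg hB _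
        have hdiff : (⟪(A - B) (e i), e i⟫ : ℝ) = ⟪A (e i), e i⟫ - ⟪B (e i), e i⟫ := by
          simp [ContinuousLinearMap.sub_apply, inner_sub_left]
        have hle : (⟪A (e i), e i⟫ : ℝ) ≤ ⟪B (e i), e i⟫ + |(⟪(A - B) (e i), e i⟫ : ℝ)| := by
          rw [hdiff]; cases abs_cases ((⟪A (e i), e i⟫ : ℝ) - ⟪B (e i), e i⟫) <;> linarith
        calc ENNReal.ofReal (⟪A (e i), e i⟫ : ℝ)
            ≤ ENNReal.ofReal ((⟪B (e i), e i⟫ : ℝ) + |(⟪(A - B) (e i), e i⟫ : ℝ)|) :=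
              ENNReal.ofReal_le_ofReal hle
          _ = _ := by rw [ENNReal.ofReal_add hb (abs_nonneg _), ← enorm_eq_nnnorm, Real.enorm_eq_ofReal_abs]
    _ = _ + _ := Finset.sum_add_distrib
    _ ≤ posTrace B + traceNorm (A - B) :=
        add_le_add (sum_le_posTrace he) (sum_le_traceNorm he he)

end Aux2
section Comp
variable {H : Type*} [NormedAddCommGroup H] [InnerProductSpace ℝ H] [CompleteSpace H]

local notation "⟪" x ", " y "⟫" => @inner ℝ _ _ x y

theorem orthonormal_append {m l : ℕ} {g : Fin m → H} {h : Fin l → H}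
    (hg : Orthonormal ℝ g) (hh : Orthonormal ℝ h)
    (hgh : ∀ j k, (⟪g j, h k⟫ : ℝ) = 0) :
    Orthonormal ℝ (Fin.append g h) := by
  rw [orthonormal_iff_ite] at hg hh ⊢
  intro i j
  refine Fin.addCases (fun i' => ?_) (fun i' => ?_) i
  · refine Fin.addCases (fun j' => ?_) (fun j' => ?_) j
    · rw [Fin.append_left, Fin.append_left, hg i' j']
      simp [Fin.castAdd_inj]
    · rw [Fin.append_left, Fin.append_right, hgh i' j']
      have hne : (Fin.castAdd l i') ≠ (Fin.natAdd m j') := by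
        simp only [Fin.ne_iff_vne, Fin.coe_castAdd, Fin.coe_natAdd]
        omega
      simp [hne]
  · refine Fin.addCases (fun j' => ?_) (fun j' => ?_) j
    · rw [Fin.append_right, Fin.append_left, real_inner_comm, hgh j' i']
      have hne : (Fin.natAdd m i') ≠ (Fin.castAdd l j') := by
        simp only [Fin.ne_iff_vne, Fin.coe_castAdd, Fin.coe_natAdd]
        omega
      simp [hne]
    · rw [Fin.append_right, Fin.append_right, hh i' j']
      have : (Fin.natAdd m i' = Fin.natAdd m j') ↔ i' = j' := by
        simp [Fin.ext_iff]
      simp [this]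

theorem main_comp {C : H →L[ℝ] H} (hC : C.IsPositive) (htc : posTrace C ≠ ⊤)
    {m : ℕ} {g : Fin m → H} (hg : Orthonormal ℝ g)
    {n : ℕ} (u : Fin n → H)
    (hbessel : ∀ x : H, ∑ i, (⟪u i, x⟫ : ℝ) ^ 2 ≤ ‖x‖ ^ 2)
    (horth : ∀ i j, (⟪u i, g j⟫ : ℝ) = 0) :
    ∑ i, (⟪C (u i), u i⟫ : ℝ) ≤ (posTrace C).toReal - ∑ j, (⟪C (g j), g j⟫ : ℝ) := by
  classical
  set U : Submodule ℝ H := Submodule.span ℝ (Set.range u) with hU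
  haveI : FiniteDimensional ℝ U := FiniteDimensional.span_of_finite ℝ (Set.finite_range u)
  set l : ℕ := Module.finrank ℝ U with hl
  set Sc : U →ₗ[ℝ] U :=
    (((Submodule.orthogonalProjectionOnto U).toLinearMap).comp (C.toLinearMap)).comp U.subtype with hScdef
  have hproj : ∀ (x : H) (w : U), (⟪((Submodule.orthogonalProjectionOnto U x : U) : H), (w : H)⟫ : ℝ)
      = ⟪x, (w : H)⟫ := by
    intro x w
    have h0 := Submodule.starProjection_inner_eq_zero x (w : H) w.2
    rw [inner_sub_left, sub_eq_zero] at h0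
    exact h0.symm
  have hsymm : Sc.IsSymmetric := by
    intro v w
    show (⟪((Submodule.orthogonalProjectionOnto U (C (v : H)) : U) : H), (w : H)⟫ : ℝ)
        = ⟪(v : H), ((Submodule.orthogonalProjectionOnto U (C (w : H)) : U) : H)⟫
    rw [hproj]
    conv_rhs => rw [real_inner_comm, hproj]
    rw [selfadj_inner_symm hC.isSelfAdjoint]
    exact real_inner_comm _ _
  set b := hsymm.eigenvectorBasis hl.symm with hb
  set lam : Fin l → ℝ := hsymm.eigenvalues hl.symm with hlam
  set hfam : Fin l → H := fun k => ((b k : U) : H) with hhfam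
  have hh : Orthonormal ℝ hfam := by
    rw [orthonormal_iff_ite]
    intro i j
    have hob := b.orthonormal
    rw [orthonormal_iff_ite] at hob
    have h2 := hob i j
    rwa [Submodule.coe_inner] at h2
  have hobite := b.orthonormal
  rw [orthonormal_iff_ite] at hobite
  have hdiag : ∀ k k', (⟪C (hfam k), hfam k'⟫ : ℝ) = if k = k' then lam k else 0 := by
    intro k k'
    have e1 : (⟪C (hfam k), hfam k'⟫ : ℝ) = ⟪Sc (b k), b k'⟫ := by
      rw [Submodule.coe_inner]
      show _ = (⟪((Submodule.orthogonalProjectionOnto U (C (hfam k)) : U) : H), ((b k' : U) : H)⟫ : ℝ)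
      rw [hproj]
    rw [e1, LinearMap.IsSymmetric.apply_eigenvectorBasis]
    rw [real_inner_smul_left, hobite k k']
    split_ifs <;> simp <;> rfl
  have lam_nonneg : ∀ k, 0 ≤ lam k := by
    intro k
    have h0 := hdiag k k
    rw [if_pos rfl] at h0
    rw [← h0]
    exact pos_inner_nonneg hC _
  have hmem : ∀ i, u i ∈ U := fun i => Submodule.subset_span ⟨i, rfl⟩
  have hrep : ∀ i, u i = ∑ k, (⟪hfam k, u i⟫ : ℝ) • hfam k := by
    intro i
    have hs := b.sum_repr' (⟨u i, hmem i⟩ : U)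
    have hs2 := congrArg (Subtype.val) hs
    simp only [AddSubmonoidClass.coe_finset_sum, SetLike.val_smul, Submodule.coe_inner] at hs2
    exact hs2.symm
  have hquad : ∀ i, (⟪C (u i), u i⟫ : ℝ) = ∑ k, (⟪hfam k, u i⟫ : ℝ) ^ 2 * lam k := by
    intro i
    conv_lhs => rw [hrep i]
    rw [map_sum, sum_inner]
    simp only [ContinuousLinearMap.map_smul, real_inner_smul_left, inner_sum,
      real_inner_smul_right, hdiag, mul_ite, mul_zero, Finset.sum_ite_eq',
      Finset.mem_univ, if_pos]
    refine Finset.sum_congr rfl fun k _ => ?_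
    rw [Finset.sum_ite_eq]
    simp only [Finset.mem_univ, if_true]
    ring
  have hgh' : ∀ j k, (⟪g j, hfam k⟫ : ℝ) = 0 := by
    intro j k
    have hspan : ∀ v ∈ U, (⟪v, g j⟫ : ℝ) = 0 := by
      intro v hv
      refine Submodule.span_induction ?_ ?_ ?_ ?_ hv
      · rintro x ⟨i, rfl⟩; exact horth i j
      · simp
      · intro x y _ _ hx' hy'; rw [inner_add_left, hx', hy']; ring
      · intro a x _ hx'; rw [real_inner_smul_left, hx']; ring
    rw [real_inner_comm]
    exact hspan _ (b k).2
  have happ := sum_inner_le_posTrace_toReal hC htc (orthonormal_append hg hh hgh')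
  rw [Fin.sum_univ_add] at happ
  simp only [Fin.append_left, Fin.append_right] at happ
  have hfinal : ∑ i, (⟪C (u i), u i⟫ : ℝ) ≤ ∑ k, (⟪C (hfam k), hfam k⟫ : ℝ) := by
    calc ∑ i, (⟪C (u i), u i⟫ : ℝ) = ∑ i, ∑ k, (⟪hfam k, u i⟫ : ℝ) ^ 2 * lam k :=
          Finset.sum_congr rfl fun i _ => hquad i
      _ = ∑ k, (∑ i, (⟪hfam k, u i⟫ : ℝ) ^ 2) * lam k := by
          rw [Finset.sum_comm]
          exact Finset.sum_congr rfl fun k _ => (Finset.sum_mul _ _ _).symm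
      _ ≤ ∑ k, 1 * lam k := by
          refine Finset.sum_le_sum fun k _ => mul_le_mul_of_nonneg_right ?_ (lam_nonneg k)
          have hb1 : ∑ i, (⟪u i, hfam k⟫ : ℝ) ^ 2 ≤ ‖hfam k‖ ^ 2 := hbessel (hfam k)
          have hn1 : ‖hfam k‖ = 1 := hh.1 k
          rw [hn1] at hb1
          calc ∑ i, (⟪hfam k, u i⟫ : ℝ) ^ 2 = ∑ i, (⟪u i, hfam k⟫ : ℝ) ^ 2 :=
                Finset.sum_congr rfl fun i _ => by rw [real_inner_comm]
            _ ≤ 1 ^ 2 := hb1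
            _ = 1 := one_pow 2
      _ = ∑ k, (⟪C (hfam k), hfam k⟫ : ℝ) := by
          refine Finset.sum_congr rfl fun k _ => ?_
          rw [hdiag k k, if_pos rfl, one_mul]
  linarith
end Comp
section PFa
variable {H : Type*} [NormedAddCommGroup H] [InnerProductSpace ℝ H] [CompleteSpace H]

local notation "⟪" x ", " y "⟫" => @inner ℝ _ _ x y

theorem orthonormal_empty_fin : Orthonormal ℝ (fun _ : Fin 0 => (0 : H)) := by
  rw [orthonormal_iff_ite]; intro i; exact i.elim0

theorem bessel_abs {n : ℕ} {v : Fin n → H} (hv : Orthonormal ℝ v) (x : H) :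
    ∑ i, (⟪v i, x⟫ : ℝ) ^ 2 ≤ ‖x‖ ^ 2 := by
  have h := hv.sum_inner_products_le (x := x) (s := Finset.univ)
  simpa [Real.norm_eq_abs, sq_abs] using h

theorem inner_sum_smul {m : ℕ} (g : Fin m → H) (c : Fin m → ℝ) (x : H) :
    (⟪∑ j, c j • g j, x⟫ : ℝ) = ∑ j, c j * ⟪g j, x⟫ := by
  rw [sum_inner]
  exact Finset.sum_congr rfl fun j _ => real_inner_smul_left _ _ _

theorem inner_g_sum {m : ℕ} {g : Fin m → H} (hg : Orthonormal ℝ g) (c : Fin m → ℝ) (j : Fin m) :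
    (⟪∑ k, c k • g k, g j⟫ : ℝ) = c j := by
  have hgi := hg
  rw [orthonormal_iff_ite] at hgi
  rw [inner_sum_smul]
  simp [hgi, mul_ite, Finset.sum_ite_eq']

theorem inner_g_sum' {m : ℕ} {g : Fin m → H} (hg : Orthonormal ℝ g) (c : Fin m → ℝ) (j : Fin m) :
    (⟪g j, ∑ k, c k • g k⟫ : ℝ) = c j := by
  rw [real_inner_comm]; exact inner_g_sum hg c j

theorem inner_res_g {m : ℕ} {g : Fin m → H} (hg : Orthonormal ℝ g) (v : H) (j : Fin m) :
    (⟪v - ∑ k, (⟪v, g k⟫ : ℝ) • g k, g j⟫ : ℝ) = 0 := by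
  rw [inner_sub_left, inner_g_sum hg, sub_self]

theorem proj_inner {m : ℕ} {g : Fin m → H} (_hg : Orthonormal ℝ g) (v x : H) :
    (⟪∑ j, (⟪v, g j⟫ : ℝ) • g j, x⟫ : ℝ) = ⟪v, ∑ j, (⟪x, g j⟫ : ℝ) • g j⟫ := by
  rw [inner_sum_smul, inner_sum]
  refine Finset.sum_congr rfl fun j _ => ?_
  rw [real_inner_smul_right, real_inner_comm x (g j)]
  ring

theorem norm_sq_proj {m : ℕ} {g : Fin m → H} (hg : Orthonormal ℝ g) (x : H) :
    ‖∑ j, (⟪x, g j⟫ : ℝ) • g j‖ ^ 2 = ∑ j, (⟪x, g j⟫ : ℝ) ^ 2 := by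
  have h : (⟪∑ j, (⟪x, g j⟫ : ℝ) • g j, ∑ j, (⟪x, g j⟫ : ℝ) • g j⟫ : ℝ)
      = ∑ j, (⟪x, g j⟫ : ℝ) ^ 2 := by
    rw [inner_sum_smul]
    refine Finset.sum_congr rfl fun j _ => ?_
    rw [inner_g_sum' hg]
    ring
  rw [← real_inner_self_eq_norm_sq, h]

theorem inner_proj_self {m : ℕ} {g : Fin m → H} (_hg : Orthonormal ℝ g) (x : H) :
    (⟪∑ j, (⟪x, g j⟫ : ℝ) • g j, x⟫ : ℝ) = ∑ j, (⟪x, g j⟫ : ℝ) ^ 2 := by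
  rw [inner_sum_smul]
  refine Finset.sum_congr rfl fun j _ => ?_
  rw [real_inner_comm x (g j)]
  ring

theorem bessel_proj {m n : ℕ} {g : Fin m → H} (hg : Orthonormal ℝ g)
    {v : Fin n → H} (hv : Orthonormal ℝ v) (x : H) :
    ∑ i, (⟪∑ j, (⟪v i, g j⟫ : ℝ) • g j, x⟫ : ℝ) ^ 2 ≤ ‖x‖ ^ 2 := by
  calc ∑ i, (⟪∑ j, (⟪v i, g j⟫ : ℝ) • g j, x⟫ : ℝ) ^ 2
      = ∑ i, (⟪v i, ∑ j, (⟪x, g j⟫ : ℝ) • g j⟫ : ℝ) ^ 2 :=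
        Finset.sum_congr rfl fun i _ => by rw [proj_inner hg]
    _ ≤ ‖∑ j, (⟪x, g j⟫ : ℝ) • g j‖ ^ 2 := bessel_abs hv _
    _ = ∑ j, (⟪x, g j⟫ : ℝ) ^ 2 := norm_sq_proj hg x
    _ = ∑ j, (⟪g j, x⟫ : ℝ) ^ 2 :=
        Finset.sum_congr rfl fun j _ => by rw [real_inner_comm]
    _ ≤ ‖x‖ ^ 2 := bessel_abs hg x

theorem norm_sq_res_le {m : ℕ} {g : Fin m → H} (hg : Orthonormal ℝ g) (x : H) :
    ‖x - ∑ j, (⟪x, g j⟫ : ℝ) • g j‖ ^ 2 ≤ ‖x‖ ^ 2 := by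
  set Px := ∑ j, (⟪x, g j⟫ : ℝ) • g j with hPx
  have e1 : (⟪Px, x⟫ : ℝ) = ∑ j, (⟪x, g j⟫ : ℝ) ^ 2 := inner_proj_self hg x
  have e2 : (⟪x, Px⟫ : ℝ) = ∑ j, (⟪x, g j⟫ : ℝ) ^ 2 := by rw [real_inner_comm]; exact e1
  have e3 : (⟪Px, Px⟫ : ℝ) = ∑ j, (⟪x, g j⟫ : ℝ) ^ 2 := by
    rw [real_inner_self_eq_norm_sq]; exact norm_sq_proj hg x
  have key : (⟪x - Px, x - Px⟫ : ℝ) = ⟪x, x⟫ - ∑ j, (⟪x, g j⟫ : ℝ) ^ 2 := by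
    rw [inner_sub_left, inner_sub_right, inner_sub_right, e1, e2, e3]
    ring
  have hsum0 : (0:ℝ) ≤ ∑ j, (⟪x, g j⟫ : ℝ) ^ 2 :=
    Finset.sum_nonneg fun j _ => sq_nonneg _
  have h4 : ‖x - Px‖ ^ 2 = ‖x‖ ^ 2 - ∑ j, (⟪x, g j⟫ : ℝ) ^ 2 := by
    rw [← real_inner_self_eq_norm_sq, key, real_inner_self_eq_norm_sq]
  linarith

theorem bessel_res {m n : ℕ} {g : Fin m → H} (hg : Orthonormal ℝ g)
    {v : Fin n → H} (hv : Orthonormal ℝ v) (x : H) :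
    ∑ i, (⟪v i - ∑ j, (⟪v i, g j⟫ : ℝ) • g j, x⟫ : ℝ) ^ 2 ≤ ‖x‖ ^ 2 := by
  set Px := ∑ j, (⟪x, g j⟫ : ℝ) • g j with hPx
  calc ∑ i, (⟪v i - ∑ j, (⟪v i, g j⟫ : ℝ) • g j, x⟫ : ℝ) ^ 2
      = ∑ i, (⟪v i, x - Px⟫ : ℝ) ^ 2 := by
        refine Finset.sum_congr rfl fun i _ => ?_
        rw [inner_sub_left, inner_sub_right, proj_inner hg]
    _ ≤ ‖x - Px‖ ^ 2 := bessel_abs hv _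
    _ ≤ ‖x‖ ^ 2 := norm_sq_res_le hg x

end PFa
section PFb
variable {H : Type*} [NormedAddCommGroup H] [InnerProductSpace ℝ H] [CompleteSpace H]

local notation "⟪" x ", " y "⟫" => @inner ℝ _ _ x y

theorem cross_bound {A B : H →L[ℝ] H} (hA : A.IsPositive) (hB : B.IsPositive)
    {n : ℕ} (x y : Fin n → H) {ax ay bx b2 : ℝ}
    (hax : ∑ i, (⟪A (x i), x i⟫ : ℝ) ≤ ax) (hay : ∑ i, (⟪A (y i), y i⟫ : ℝ) ≤ ay)
    (hbx : ∑ i, (⟪B (x i), x i⟫ : ℝ) ≤ bx) (hby : ∑ i, (⟪B (y i), y i⟫ : ℝ) ≤ b2) :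
    ∑ i, |(⟪(A - B) (x i), y i⟫ : ℝ)| ≤
      Real.sqrt ax * Real.sqrt ay + Real.sqrt bx * Real.sqrt b2 := by
  have h1 : ∑ i, |(⟪(A - B) (x i), y i⟫ : ℝ)|
      ≤ ∑ i, (|(⟪A (x i), y i⟫ : ℝ)| + |(⟪B (x i), y i⟫ : ℝ)|) := by
    refine Finset.sum_le_sum fun i _ => ?_
    have hd : (⟪(A - B) (x i), y i⟫ : ℝ) = ⟪A (x i), y i⟫ - ⟪B (x i), y i⟫ := by
      simp [ContinuousLinearMap.sub_apply, inner_sub_left]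
    rw [hd]
    exact abs_sub _ _
  rw [Finset.sum_add_distrib] at h1
  have h2 := pos_sum_abs_inner_le hA x y
  have h3 := pos_sum_abs_inner_le hB x y
  have h4 : Real.sqrt (∑ i, (⟪A (x i), x i⟫ : ℝ)) * Real.sqrt (∑ i, (⟪A (y i), y i⟫ : ℝ))
      ≤ Real.sqrt ax * Real.sqrt ay :=
    mul_le_mul (Real.sqrt_le_sqrt hax) (Real.sqrt_le_sqrt hay)
      (Real.sqrt_nonneg _) (Real.sqrt_nonneg _)
  have h5 : Real.sqrt (∑ i, (⟪B (x i), x i⟫ : ℝ)) * Real.sqrt (∑ i, (⟪B (y i), y i⟫ : ℝ))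
      ≤ Real.sqrt bx * Real.sqrt b2 :=
    mul_le_mul (Real.sqrt_le_sqrt hbx) (Real.sqrt_le_sqrt hby)
      (Real.sqrt_nonneg _) (Real.sqrt_nonneg _)
  linarith

theorem key_family_bound {A B : H →L[ℝ] H} (hA : A.IsPositive) (hB : B.IsPositive)
    (hAtc : posTrace A ≠ ⊤) (hBtc : posTrace B ≠ ⊤)
    {m : ℕ} {g : Fin m → H} (hg : Orthonormal ℝ g)
    {c : ℝ} (hc : 0 ≤ c)
    (hTbound : ∀ x y : H, ‖x‖ = 1 → ‖y‖ = 1 → |(⟪(A - B) x, y⟫ : ℝ)| ≤ c)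
    {n : ℕ} {e f : Fin n → H} (he : Orthonormal ℝ e) (hf : Orthonormal ℝ f) :
    ∑ i, |(⟪(A - B) (e i), f i⟫ : ℝ)| ≤
      (m : ℝ) ^ 2 * c
      + 2 * (Real.sqrt ((posTrace A).toReal) *
              Real.sqrt ((posTrace A).toReal - ∑ j, (⟪A (g j), g j⟫ : ℝ))
           + Real.sqrt ((posTrace B).toReal) *
              Real.sqrt ((posTrace B).toReal - ∑ j, (⟪B (g j), g j⟫ : ℝ)))
      + ((posTrace A).toReal - ∑ j, (⟪A (g j), g j⟫ : ℝ))
      + ((posTrace B).toReal - ∑ j, (⟪B (g j), g j⟫ : ℝ)) := by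
  classical
  set p : Fin n → H := fun i => ∑ j, (⟪e i, g j⟫ : ℝ) • g j with hp
  set q : Fin n → H := fun i => e i - p i with hq
  set p' : Fin n → H := fun i => ∑ j, (⟪f i, g j⟫ : ℝ) • g j with hp'
  set q' : Fin n → H := fun i => f i - p' i with hq'
  set trA : ℝ := (posTrace A).toReal with htrA
  set trB : ℝ := (posTrace B).toReal with htrB
  set sA : ℝ := trA - ∑ j, (⟪A (g j), g j⟫ : ℝ) with hsA
  set sB : ℝ := trB - ∑ j, (⟪B (g j), g j⟫ : ℝ) with hsB
  have hsA0 : 0 ≤ sA := by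
    have := sum_inner_le_posTrace_toReal hA hAtc hg
    rw [hsA]; linarith
  have hsB0 : 0 ≤ sB := by
    have := sum_inner_le_posTrace_toReal hB hBtc hg
    rw [hsB]; linarith
  -- compression bounds
  have hAq : ∑ i, (⟪A (q i), q i⟫ : ℝ) ≤ sA :=
    main_comp hA hAtc hg q (fun x => bessel_res hg he x)
      (fun i j => inner_res_g hg (e i) j)
  have hBq : ∑ i, (⟪B (q i), q i⟫ : ℝ) ≤ sB :=
    main_comp hB hBtc hg q (fun x => bessel_res hg he x)
      (fun i j => inner_res_g hg (e i) j)
  have hAq' : ∑ i, (⟪A (q' i), q' i⟫ : ℝ) ≤ sA :=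
    main_comp hA hAtc hg q' (fun x => bessel_res hg hf x)
      (fun i j => inner_res_g hg (f i) j)
  have hBq' : ∑ i, (⟪B (q' i), q' i⟫ : ℝ) ≤ sB :=
    main_comp hB hBtc hg q' (fun x => bessel_res hg hf x)
      (fun i j => inner_res_g hg (f i) j)
  have hAp : ∑ i, (⟪A (p i), p i⟫ : ℝ) ≤ trA := by
    have h0 := main_comp hA hAtc (g := fun _ : Fin 0 => (0 : H)) orthonormal_empty_fin p
      (fun x => bessel_proj hg he x) (fun i j => j.elim0)
    simpa using h0
  have hBp : ∑ i, (⟪B (p i), p i⟫ : ℝ) ≤ trB := by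
    have h0 := main_comp hB hBtc (g := fun _ : Fin 0 => (0 : H)) orthonormal_empty_fin p
      (fun x => bessel_proj hg he x) (fun i j => j.elim0)
    simpa using h0
  have hAp' : ∑ i, (⟪A (p' i), p' i⟫ : ℝ) ≤ trA := by
    have h0 := main_comp hA hAtc (g := fun _ : Fin 0 => (0 : H)) orthonormal_empty_fin p'
      (fun x => bessel_proj hg hf x) (fun i j => j.elim0)
    simpa using h0
  have hBp' : ∑ i, (⟪B (p' i), p' i⟫ : ℝ) ≤ trB := by
    have h0 := main_comp hB hBtc (g := fun _ : Fin 0 => (0 : H)) orthonormal_empty_fin p'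
      (fun x => bessel_proj hg hf x) (fun i j => j.elim0)
    simpa using h0
  -- decomposition
  have hsplit : ∀ i, (⟪(A - B) (e i), f i⟫ : ℝ)
      = ⟪(A - B) (p i), p' i⟫ + ⟪(A - B) (p i), q' i⟫
        + ⟪(A - B) (q i), p' i⟫ + ⟪(A - B) (q i), q' i⟫ := by
    intro i
    have he' : e i = p i + q i := by rw [hq]; simp
    have hf' : f i = p' i + q' i := by rw [hq']; simp
    calc (⟪(A - B) (e i), f i⟫ : ℝ) = ⟪(A - B) (p i + q i), p' i + q' i⟫ := by
          rw [← he', ← hf']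
      _ = _ := by
          rw [map_add, inner_add_left, inner_add_right, inner_add_right]
          ring
  have hdecomp : ∑ i, |(⟪(A - B) (e i), f i⟫ : ℝ)|
      ≤ ∑ i, |(⟪(A - B) (p i), p' i⟫ : ℝ)| + ∑ i, |(⟪(A - B) (p i), q' i⟫ : ℝ)|
        + ∑ i, |(⟪(A - B) (q i), p' i⟫ : ℝ)| + ∑ i, |(⟪(A - B) (q i), q' i⟫ : ℝ)| := by
    rw [← Finset.sum_add_distrib, ← Finset.sum_add_distrib, ← Finset.sum_add_distrib]
    refine Finset.sum_le_sum fun i _ => ?_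
    rw [hsplit i]
    calc |(⟪(A - B) (p i), p' i⟫ : ℝ) + ⟪(A - B) (p i), q' i⟫
          + ⟪(A - B) (q i), p' i⟫ + ⟪(A - B) (q i), q' i⟫|
        ≤ |(⟪(A - B) (p i), p' i⟫ : ℝ) + ⟪(A - B) (p i), q' i⟫
          + ⟪(A - B) (q i), p' i⟫| + |(⟪(A - B) (q i), q' i⟫ : ℝ)| := abs_add_le _ _
      _ ≤ |(⟪(A - B) (p i), p' i⟫ : ℝ) + ⟪(A - B) (p i), q' i⟫|
          + |(⟪(A - B) (q i), p' i⟫ : ℝ)| + |(⟪(A - B) (q i), q' i⟫ : ℝ)| := by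
            have := abs_add_le ((⟪(A - B) (p i), p' i⟫ : ℝ) + ⟪(A - B) (p i), q' i⟫)
              (⟪(A - B) (q i), p' i⟫ : ℝ)
            linarith
      _ ≤ _ := by
            have := abs_add_le (⟪(A - B) (p i), p' i⟫ : ℝ) (⟪(A - B) (p i), q' i⟫ : ℝ)
            linarith
  -- term 1
  have hterm1 : ∑ i, |(⟪(A - B) (p i), p' i⟫ : ℝ)| ≤ (m : ℝ) ^ 2 * c := by
    have hstep : ∀ i, |(⟪(A - B) (p i), p' i⟫ : ℝ)|
        ≤ ∑ j, ∑ k, |(⟪e i, g j⟫ : ℝ)| * |(⟪f i, g k⟫ : ℝ)| * c := by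
      intro i
      have hTp : (⟪(A - B) (p i), p' i⟫ : ℝ)
          = ∑ j, ∑ k, (⟪e i, g j⟫ : ℝ) * (⟪f i, g k⟫ : ℝ) * ⟪(A - B) (g j), g k⟫ := by
        rw [hp, hp']
        rw [map_sum, sum_inner]
        refine Finset.sum_congr rfl fun j _ => ?_
        rw [ContinuousLinearMap.map_smul, real_inner_smul_left, inner_sum, Finset.mul_sum]
        refine Finset.sum_congr rfl fun k _ => ?_
        rw [real_inner_smul_right]
        ring
      rw [hTp]
      refine (Finset.abs_sum_le_sum_abs _ _).trans ?_
      refine Finset.sum_le_sum fun j _ => ?_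
      refine (Finset.abs_sum_le_sum_abs _ _).trans ?_
      refine Finset.sum_le_sum fun k _ => ?_
      rw [abs_mul, abs_mul]
      have hb := hTbound (g j) (g k) (hg.1 j) (hg.1 k)
      exact mul_le_mul_of_nonneg_left hb (by positivity)
    calc ∑ i, |(⟪(A - B) (p i), p' i⟫ : ℝ)|
        ≤ ∑ i, ∑ j, ∑ k, |(⟪e i, g j⟫ : ℝ)| * |(⟪f i, g k⟫ : ℝ)| * c :=
          Finset.sum_le_sum fun i _ => hstep i
      _ = ∑ j, ∑ i, ∑ k, |(⟪e i, g j⟫ : ℝ)| * |(⟪f i, g k⟫ : ℝ)| * c := Finset.sum_comm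
      _ = ∑ j, ∑ k, ∑ i, |(⟪e i, g j⟫ : ℝ)| * |(⟪f i, g k⟫ : ℝ)| * c :=
          Finset.sum_congr rfl fun j _ => Finset.sum_comm
      _ = ∑ j, ∑ k, (∑ i, |(⟪e i, g j⟫ : ℝ)| * |(⟪f i, g k⟫ : ℝ)|) * c :=
          Finset.sum_congr rfl fun j _ => Finset.sum_congr rfl fun k _ =>
            (Finset.sum_mul _ _ _).symm
      _ ≤ ∑ j, ∑ k, 1 * c := by
          refine Finset.sum_le_sum fun j _ => Finset.sum_le_sum fun k _ => ?_
          refine mul_le_mul_of_nonneg_right ?_ hc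
          have hcs := Real.sum_mul_le_sqrt_mul_sqrt Finset.univ
            (fun i => |(⟪e i, g j⟫ : ℝ)|) (fun i => |(⟪f i, g k⟫ : ℝ)|)
          have hbe : ∑ i, |(⟪e i, g j⟫ : ℝ)| ^ 2 ≤ 1 := by
            have h1 := bessel_abs he (g j)
            have h2 : ‖g j‖ = 1 := hg.1 j
            calc ∑ i, |(⟪e i, g j⟫ : ℝ)| ^ 2 = ∑ i, (⟪e i, g j⟫ : ℝ) ^ 2 :=
                  Finset.sum_congr rfl fun i _ => sq_abs _
              _ ≤ ‖g j‖ ^ 2 := h1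
              _ = 1 := by rw [h2]; norm_num
          have hbf : ∑ i, |(⟪f i, g k⟫ : ℝ)| ^ 2 ≤ 1 := by
            have h1 := bessel_abs hf (g k)
            have h2 : ‖g k‖ = 1 := hg.1 k
            calc ∑ i, |(⟪f i, g k⟫ : ℝ)| ^ 2 = ∑ i, (⟪f i, g k⟫ : ℝ) ^ 2 :=
                  Finset.sum_congr rfl fun i _ => sq_abs _
              _ ≤ ‖g k‖ ^ 2 := h1
              _ = 1 := by rw [h2]; norm_num
          calc ∑ i, |(⟪e i, g j⟫ : ℝ)| * |(⟪f i, g k⟫ : ℝ)|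
              ≤ Real.sqrt (∑ i, |(⟪e i, g j⟫ : ℝ)| ^ 2)
                * Real.sqrt (∑ i, |(⟪f i, g k⟫ : ℝ)| ^ 2) := hcs
            _ ≤ 1 * 1 := by
                refine mul_le_mul ?_ ?_ (Real.sqrt_nonneg _) zero_le_one
                · exact (Real.sqrt_le_sqrt hbe).trans_eq Real.sqrt_one
                · exact (Real.sqrt_le_sqrt hbf).trans_eq Real.sqrt_one
            _ = 1 := one_mul 1
      _ = (m : ℝ) ^ 2 * c := by
          simp [Finset.sum_const, Finset.card_univ]
          ring
  -- terms 2-4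
  have hterm2 : ∑ i, |(⟪(A - B) (p i), q' i⟫ : ℝ)|
      ≤ Real.sqrt trA * Real.sqrt sA + Real.sqrt trB * Real.sqrt sB :=
    cross_bound hA hB p q' hAp hAq' hBp hBq'
  have hterm3 : ∑ i, |(⟪(A - B) (q i), p' i⟫ : ℝ)|
      ≤ Real.sqrt trA * Real.sqrt sA + Real.sqrt trB * Real.sqrt sB := by
    have h0 := cross_bound hA hB q p' hAq hAp' hBq hBp'
    calc ∑ i, |(⟪(A - B) (q i), p' i⟫ : ℝ)|
        ≤ Real.sqrt sA * Real.sqrt trA + Real.sqrt sB * Real.sqrt trB := h0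
      _ = Real.sqrt trA * Real.sqrt sA + Real.sqrt trB * Real.sqrt sB := by ring
  have hterm4 : ∑ i, |(⟪(A - B) (q i), q' i⟫ : ℝ)| ≤ sA + sB := by
    have h0 := cross_bound hA hB q q' hAq hAq' hBq hBq'
    have e1 : Real.sqrt sA * Real.sqrt sA = sA := Real.mul_self_sqrt hsA0
    have e2 : Real.sqrt sB * Real.sqrt sB = sB := Real.mul_self_sqrt hsB0
    linarith
  linarith

theorem traceNorm_sub_le_bound {A B : H →L[ℝ] H} (hA : A.IsPositive) (hB : B.IsPositive)
    (hAtc : posTrace A ≠ ⊤) (hBtc : posTrace B ≠ ⊤)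
    {m : ℕ} {g : Fin m → H} (hg : Orthonormal ℝ g)
    {c : ℝ} (hc : 0 ≤ c)
    (hTbound : ∀ x y : H, ‖x‖ = 1 → ‖y‖ = 1 → |(⟪(A - B) x, y⟫ : ℝ)| ≤ c) :
    traceNorm (A - B) ≤ ENNReal.ofReal ((m : ℝ) ^ 2 * c
      + 2 * (Real.sqrt ((posTrace A).toReal) *
              Real.sqrt ((posTrace A).toReal - ∑ j, (⟪A (g j), g j⟫ : ℝ))
           + Real.sqrt ((posTrace B).toReal) *
              Real.sqrt ((posTrace B).toReal - ∑ j, (⟪B (g j), g j⟫ : ℝ)))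
      + ((posTrace A).toReal - ∑ j, (⟪A (g j), g j⟫ : ℝ))
      + ((posTrace B).toReal - ∑ j, (⟪B (g j), g j⟫ : ℝ))) :=
  traceNorm_le_ofReal fun _n _e _f he hf =>
    key_family_bound hA hB hAtc hBtc hg hc hTbound he hf

end PFb
section Fwd
variable {H : Type*} [NormedAddCommGroup H] [InnerProductSpace ℝ H] [CompleteSpace H]

local notation "⟪" x ", " y "⟫" => @inner ℝ _ _ x y

theorem sum_normsq_le_sq {T : H →L[ℝ] H} (hT : IsSelfAdjoint T) (htop : traceNorm T ≠ ⊤)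
    {n : ℕ} {e : Fin n → H} (he : Orthonormal ℝ e) :
    ∑ i, ‖T (e i)‖ ^ 2 ≤ ((traceNorm T).toReal) ^ 2 := by
  classical
  set C : ℝ := (traceNorm T).toReal with hC
  set U : Submodule ℝ H := Submodule.span ℝ (Set.range e) with hU
  haveI : FiniteDimensional ℝ U := FiniteDimensional.span_of_finite ℝ (Set.finite_range e)
  set l : ℕ := Module.finrank ℝ U with hl
  set Sc : U →ₗ[ℝ] U :=
    (((Submodule.orthogonalProjectionOnto U).toLinearMap).comp ((T ∘L T).toLinearMap)).comp U.subtype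
    with hScdef
  have hproj : ∀ (x : H) (w : U), (⟪((Submodule.orthogonalProjectionOnto U x : U) : H), (w : H)⟫ : ℝ)
      = ⟪x, (w : H)⟫ := by
    intro x w
    have h0 := Submodule.starProjection_inner_eq_zero x (w : H) w.2
    rw [inner_sub_left, sub_eq_zero] at h0
    exact h0.symm
  have hTT : ∀ x y : H, (⟪(T ∘L T) x, y⟫ : ℝ) = ⟪T x, T y⟫ := by
    intro x y
    rw [ContinuousLinearMap.comp_apply]
    exact selfadj_inner_symm hT (T x) y
  have hsymm : Sc.IsSymmetric := by
    intro v w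
    show (⟪((Submodule.orthogonalProjectionOnto U ((T ∘L T) (v : H)) : U) : H), (w : H)⟫ : ℝ)
        = ⟪(v : H), ((Submodule.orthogonalProjectionOnto U ((T ∘L T) (w : H)) : U) : H)⟫
    rw [hproj]
    conv_rhs => rw [real_inner_comm, hproj]
    rw [hTT, hTT]
    exact real_inner_comm _ _
  set b := hsymm.eigenvectorBasis hl.symm with hb
  set lam : Fin l → ℝ := hsymm.eigenvalues hl.symm with hlam
  set hfam : Fin l → H := fun k => ((b k : U) : H) with hhfam
  have hh : Orthonormal ℝ hfam := by
    rw [orthonormal_iff_ite]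
    intro i j
    have hob := b.orthonormal
    rw [orthonormal_iff_ite] at hob
    have h2 := hob i j
    rwa [Submodule.coe_inner] at h2
  have hobite := b.orthonormal
  rw [orthonormal_iff_ite] at hobite
  have hdiag : ∀ k k', (⟪T (hfam k), T (hfam k')⟫ : ℝ) = if k = k' then lam k else 0 := by
    intro k k'
    have e1 : (⟪T (hfam k), T (hfam k')⟫ : ℝ) = ⟪Sc (b k), b k'⟫ := by
      rw [← hTT, Submodule.coe_inner]
      show _ = (⟪((Submodule.orthogonalProjectionOnto U ((T ∘L T) (hfam k)) : U) : H), ((b k' : U) : H)⟫ : ℝ)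
      rw [hproj]
    rw [e1, LinearMap.IsSymmetric.apply_eigenvectorBasis]
    rw [real_inner_smul_left, hobite k k']
    split_ifs <;> simp <;> rfl
  have lam_nonneg : ∀ k, 0 ≤ lam k := by
    intro k
    have h0 := hdiag k k
    rw [if_pos rfl] at h0
    rw [← h0]
    exact real_inner_self_nonneg
  have lam_eq : ∀ k, lam k = ‖T (hfam k)‖ ^ 2 := by
    intro k
    have h0 := hdiag k k
    rw [if_pos rfl] at h0
    rw [← h0, real_inner_self_eq_norm_sq]
  have hmem : ∀ i, e i ∈ U := fun i => Submodule.subset_span ⟨i, rfl⟩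
  have hrep : ∀ i, e i = ∑ k, (⟪hfam k, e i⟫ : ℝ) • hfam k := by
    intro i
    have hs := b.sum_repr' (⟨e i, hmem i⟩ : U)
    have hs2 := congrArg (Subtype.val) hs
    simp only [AddSubmonoidClass.coe_finset_sum, SetLike.val_smul, Submodule.coe_inner] at hs2
    exact hs2.symm
  have hquad : ∀ i, ‖T (e i)‖ ^ 2 = ∑ k, (⟪hfam k, e i⟫ : ℝ) ^ 2 * lam k := by
    intro i
    rw [← real_inner_self_eq_norm_sq]
    conv_lhs => rw [hrep i]
    rw [map_sum, sum_inner]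
    simp only [ContinuousLinearMap.map_smul, real_inner_smul_left, inner_sum,
      real_inner_smul_right, hdiag, mul_ite, mul_zero]
    refine Finset.sum_congr rfl fun k _ => ?_
    rw [Finset.sum_ite_eq]
    simp only [Finset.mem_univ, if_true]
    ring
  have hsumlam : ∑ k, Real.sqrt (lam k) ≤ C := by
    set J : Finset (Fin l) := Finset.univ.filter (fun k => T (hfam k) ≠ 0) with hJ
    have hzero : ∀ k ∈ Finset.univ, k ∉ J → Real.sqrt (lam k) = 0 := by
      intro k _ hk
      simp only [hJ, Finset.mem_filter, Finset.mem_univ, true_and, not_not] at hk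
      rw [lam_eq k, hk]
      simp
    rw [← Finset.sum_subset (Finset.subset_univ J) hzero]
    set κ : ℕ := J.card with hκ
    set ι : Fin κ → Fin l := fun r => ((J.orderIsoOfFin rfl r : J) : Fin l) with hι
    have hιJ : ∀ r, ι r ∈ J := fun r => (J.orderIsoOfFin rfl r).2
    have hιinj : Function.Injective ι := by
      intro a b hab
      exact (J.orderIsoOfFin rfl).injective (Subtype.ext hab)
    have hTnz : ∀ r, T (hfam (ι r)) ≠ 0 := fun r =>
      (Finset.mem_filter.mp (hιJ r)).2
    set v : Fin κ → H := fun r => hfam (ι r) with hv'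
    set w : Fin κ → H := fun r => ‖T (v r)‖⁻¹ • T (v r) with hw'
    have hv : Orthonormal ℝ v := hh.comp ι hιinj
    have hw : Orthonormal ℝ w := by
      rw [orthonormal_iff_ite]
      intro r r'
      show (⟪‖T (v r)‖⁻¹ • T (v r), ‖T (v r')‖⁻¹ • T (v r')⟫ : ℝ) = _
      rw [real_inner_smul_left, real_inner_smul_right, hdiag]
      by_cases hrr : r = r'
      · subst hrr
        rw [if_pos rfl, if_pos rfl, lam_eq]
        have hnz : ‖T (v r)‖ ≠ 0 := norm_ne_zero_iff.mpr (hTnz r)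
        field_simp
        ring
      · have hne : ι r ≠ ι r' := fun hc => hrr (hιinj hc)
        rw [if_neg hne, if_neg hrr]
        ring
    have hsum := sum_abs_le_traceNorm_toReal htop hv hw
    have hval : ∀ r, |(⟪T (v r), w r⟫ : ℝ)| = Real.sqrt (lam (ι r)) := by
      intro r
      show |(⟪T (v r), ‖T (v r)‖⁻¹ • T (v r)⟫ : ℝ)| = _
      rw [real_inner_smul_right, real_inner_self_eq_norm_sq, lam_eq]
      have hnn : (0:ℝ) ≤ ‖T (v r)‖ := norm_nonneg _
      rw [Real.sqrt_sq hnn, abs_of_nonneg (by positivity)]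
      have hnz : ‖T (v r)‖ ≠ 0 := norm_ne_zero_iff.mpr (hTnz r)
      field_simp
    calc ∑ k ∈ J, Real.sqrt (lam k) = ∑ x : J, Real.sqrt (lam x) :=
          (Finset.sum_coe_sort J _).symm
      _ = ∑ r, Real.sqrt (lam (ι r)) :=
          (Fintype.sum_equiv (J.orderIsoOfFin rfl).toEquiv _ _ (fun r => rfl)).symm
      _ = ∑ r, |(⟪T (v r), w r⟫ : ℝ)| :=
          Finset.sum_congr rfl fun r _ => (hval r).symm
      _ ≤ C := hsum
  have hCnn : 0 ≤ C := ENNReal.toReal_nonneg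
  calc ∑ i, ‖T (e i)‖ ^ 2 = ∑ i, ∑ k, (⟪hfam k, e i⟫ : ℝ) ^ 2 * lam k :=
        Finset.sum_congr rfl fun i _ => hquad i
    _ = ∑ k, (∑ i, (⟪hfam k, e i⟫ : ℝ) ^ 2) * lam k := by
        rw [Finset.sum_comm]
        exact Finset.sum_congr rfl fun k _ => (Finset.sum_mul _ _ _).symm
    _ ≤ ∑ k, 1 * lam k := by
        refine Finset.sum_le_sum fun k _ => mul_le_mul_of_nonneg_right ?_ (lam_nonneg k)
        have hb1 : ∑ i, (⟪e i, hfam k⟫ : ℝ) ^ 2 ≤ ‖hfam k‖ ^ 2 := bessel_abs he (hfam k)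
        have hn1 : ‖hfam k‖ = 1 := hh.1 k
        rw [hn1] at hb1
        calc ∑ i, (⟪hfam k, e i⟫ : ℝ) ^ 2 = ∑ i, (⟪e i, hfam k⟫ : ℝ) ^ 2 :=
              Finset.sum_congr rfl fun i _ => by rw [real_inner_comm]
          _ ≤ 1 ^ 2 := hb1
          _ = 1 := one_pow 2
    _ = ∑ k, Real.sqrt (lam k) ^ 2 := by
        refine Finset.sum_congr rfl fun k _ => ?_
        rw [one_mul, Real.sq_sqrt (lam_nonneg k)]
    _ ≤ (∑ k, Real.sqrt (lam k)) ^ 2 :=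
        Finset.sum_sq_le_sq_sum_of_nonneg fun k _ => Real.sqrt_nonneg _
    _ ≤ C ^ 2 := by
        refine pow_le_pow_left₀ ?_ hsumlam 2
        exact Finset.sum_nonneg fun k _ => Real.sqrt_nonneg _

theorem hsNorm_le_traceNorm {T : H →L[ℝ] H} (hT : IsSelfAdjoint T) :
    hsNorm T ≤ traceNorm T := by
  by_cases htop : traceNorm T = ⊤
  · rw [htop]; exact le_top
  · have hC : (0:ℝ) ≤ (traceNorm T).toReal := ENNReal.toReal_nonneg
    have hsup : (⨆ (n : ℕ) (e : Fin n → H) (_ : Orthonormal ℝ e),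
        ∑ i, (‖T (e i)‖₊ : ℝ≥0∞) ^ 2) ≤ ENNReal.ofReal (((traceNorm T).toReal) ^ 2) := by
      refine iSup_le fun n => iSup_le fun e => iSup_le fun he => ?_
      have hconv : ∑ i, (‖T (e i)‖₊ : ℝ≥0∞) ^ 2 = ENNReal.ofReal (∑ i, ‖T (e i)‖ ^ 2) := by
        rw [ENNReal.ofReal_sum_of_nonneg (fun i _ => sq_nonneg _)]
        refine Finset.sum_congr rfl fun i _ => ?_
        rw [← enorm_eq_nnnorm, ← ofReal_norm, ← ENNReal.ofReal_pow (norm_nonneg _)]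
      rw [hconv]
      exact ENNReal.ofReal_le_ofReal (sum_normsq_le_sq hT htop he)
    calc hsNorm T ≤ (ENNReal.ofReal (((traceNorm T).toReal) ^ 2)) ^ (1/2 : ℝ) := by
          rw [hsNorm]
          exact ENNReal.rpow_le_rpow hsup (by norm_num)
      _ = traceNorm T := by
          rw [ENNReal.ofReal_pow hC, ← ENNReal.rpow_natCast (ENNReal.ofReal _) 2,
            ← ENNReal.rpow_mul]
          norm_num [ENNReal.ofReal_toReal htop]
end Fwd
section Final
variable {H : Type*} [NormedAddCommGroup H] [InnerProductSpace ℝ H] [CompleteSpace H]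

local notation "⟪" x ", " y "⟫" => @inner ℝ _ _ x y

theorem traceNorm_sub_comm (A B : H →L[ℝ] H) : traceNorm (A - B) = traceNorm (B - A) := by
  have key : ∀ P Q : H →L[ℝ] H, traceNorm (P - Q) ≤ traceNorm (Q - P) := by
    intro P Q
    refine iSup_le fun n => iSup_le fun e => iSup_le fun f => iSup_le fun he =>
      iSup_le fun hf => ?_
    refine le_trans (le_of_eq ?_) (sum_le_traceNorm he hf)
    refine Finset.sum_congr rfl fun i _ => ?_
    have hneg : ((P - Q) (e i)) = -((Q - P) (e i)) := by
      simp [ContinuousLinearMap.sub_apply]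
    rw [hneg, inner_neg_left, nnnorm_neg]
  exact le_antisymm (key A B) (key B A)

theorem exists_good_family {B : H →L[ℝ] H} (hB : B.IsPositive) (htc : posTrace B ≠ ⊤)
    {ε₁ : ℝ} (hε : 0 < ε₁) :
    ∃ (m : ℕ) (g : Fin m → H), Orthonormal ℝ g ∧
      (posTrace B).toReal - ∑ j, (⟪B (g j), g j⟫ : ℝ) < ε₁ := by
  by_cases hb : (posTrace B).toReal - ε₁ < 0
  · refine ⟨0, fun i => 0, orthonormal_empty_fin, ?_⟩
    simp only [Finset.univ_eq_empty, Finset.sum_empty, sub_zero]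
    linarith
  · push_neg at hb
    have h0 : (0:ℝ) ≤ (posTrace B).toReal - ε₁ := hb
    have hlt : ENNReal.ofReal ((posTrace B).toReal - ε₁) < posTrace B := by
      rw [ENNReal.ofReal_lt_iff_lt_toReal h0 htc]
      linarith
    have hlt2 : ENNReal.ofReal ((posTrace B).toReal - ε₁)
        < ⨆ (n : ℕ) (e : Fin n → H) (_ : Orthonormal ℝ e),
            ∑ i, ENNReal.ofReal (⟪B (e i), e i⟫ : ℝ) := by
      exact hlt
    clear hlt
    rename' hlt2 => hlt
    rw [lt_iSup_iff] at hlt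
    obtain ⟨m, hlt⟩ := hlt
    rw [lt_iSup_iff] at hlt
    obtain ⟨g, hlt⟩ := hlt
    rw [lt_iSup_iff] at hlt
    obtain ⟨hg, hlt⟩ := hlt
    refine ⟨m, g, hg, ?_⟩
    have hconv : ∑ j, ENNReal.ofReal (⟪B (g j), g j⟫ : ℝ)
        = ENNReal.ofReal (∑ j, (⟪B (g j), g j⟫ : ℝ)) := by
      rw [ENNReal.ofReal_sum_of_nonneg fun j _ => pos_inner_nonneg hB _]
    rw [hconv, ENNReal.ofReal_lt_ofReal_iff_of_nonneg h0] at hlt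
    linarith

end Final

/-- For non-negative self-adjoint trace-class operators `K n, Kinf` on a separable Hilbert
space: `‖K n − Kinf‖₁ → 0` if and only if `‖K n − Kinf‖₂ → 0` (Hilbert–Schmidt norm) and
`tr (K n) → tr Kinf`. -/
theorem traceNorm_tendsto_iff_hsNorm_and_trace_tendsto
    {H : Type*} [NormedAddCommGroup H] [InnerProductSpace ℝ H] [CompleteSpace H]
    [SecondCountableTopology H]
    (K : ℕ → H →L[ℝ] H) (Kinf : H →L[ℝ] H)
    (hK : ∀ n, (K n).IsPositive) (hKinf : Kinf.IsPositive)
    (hKtc : ∀ n, traceNorm (K n) ≠ ⊤) (hKinftc : traceNorm Kinf ≠ ⊤) :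
    Tendsto (fun n => traceNorm (K n - Kinf)) atTop (nhds 0) ↔
      (Tendsto (fun n => hsNorm (K n - Kinf)) atTop (nhds 0) ∧
        Tendsto (fun n => posTrace (K n)) atTop (nhds (posTrace Kinf))) := by
  have hposK : ∀ n, posTrace (K n) ≠ ⊤ :=
    fun n => ne_top_of_le_ne_top (hKtc n) (posTrace_le_traceNorm _)
  have hposKinf : posTrace Kinf ≠ ⊤ := ne_top_of_le_ne_top hKinftc (posTrace_le_traceNorm _)
  constructor
  · intro h1
    constructor
    · refine tendsto_of_tendsto_of_tendsto_of_le_of_le tendsto_const_nhds h1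
        (fun n => zero_le) (fun n => hsNorm_le_traceNorm ?_)
      exact ((hK n).isSelfAdjoint).sub hKinf.isSelfAdjoint
    · have hub : ∀ n, posTrace (K n) ≤ posTrace Kinf + traceNorm (K n - Kinf) :=
        fun n => posTrace_le_posTrace_add_traceNorm hKinf
      have hlb : ∀ n, posTrace Kinf - traceNorm (K n - Kinf) ≤ posTrace (K n) := by
        intro n
        rw [tsub_le_iff_right]
        calc posTrace Kinf ≤ posTrace (K n) + traceNorm (Kinf - K n) :=
              posTrace_le_posTrace_add_traceNorm (hK n)
          _ = posTrace (K n) + traceNorm (K n - Kinf) := by rw [traceNorm_sub_comm]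
      have hupper : Tendsto (fun n => posTrace Kinf + traceNorm (K n - Kinf)) atTop
          (nhds (posTrace Kinf)) := by
        have := Tendsto.add (tendsto_const_nhds (x := posTrace Kinf) (f := atTop)) h1
        simpa using this
      have hlower : Tendsto (fun n => posTrace Kinf - traceNorm (K n - Kinf)) atTop
          (nhds (posTrace Kinf)) := by
        have := ENNReal.Tendsto.sub (tendsto_const_nhds (x := posTrace Kinf) (f := atTop)) h1
          (Or.inl hposKinf)
        simpa using this
      exact tendsto_of_tendsto_of_tendsto_of_le_of_le hlower hupper hlb hub
  · rintro ⟨h2, h3⟩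
    rw [ENNReal.tendsto_nhds_zero]
    intro ε hε
    have hmintop : min ε 1 ≠ ⊤ := ne_top_of_le_ne_top ENNReal.one_ne_top (min_le_right _ _)
    set ε' : ℝ := (min ε 1).toReal with hε'def
    have hε'pos : 0 < ε' := ENNReal.toReal_pos (lt_min hε zero_lt_one).ne' hmintop
    have hofReal_le : ENNReal.ofReal ε' ≤ ε := by
      rw [hε'def, ENNReal.ofReal_toReal hmintop]
      exact min_le_left _ _
    suffices hsuff : ∀ᶠ n in atTop, traceNorm (K n - Kinf) ≤ ENNReal.ofReal ε' by
      exact hsuff.mono fun n hn => hn.trans hofReal_le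
    set b : ℝ := (posTrace Kinf).toReal with hbdef
    have hb0 : 0 ≤ b := ENNReal.toReal_nonneg
    set sb : ℝ := Real.sqrt (b + 1) with hsbdef
    have hsb0 : 0 ≤ sb := Real.sqrt_nonneg _
    set ε₁ : ℝ := min 1 ((ε' / (16 * (sb + 1))) ^ 2) with hε₁def
    have hε₁pos : 0 < ε₁ := lt_min zero_lt_one (by positivity)
    have hε₁le1 : ε₁ ≤ 1 := min_le_left _ _
    obtain ⟨m, g, hg, hgood⟩ := exists_good_family hKinf hposKinf hε₁pos
    set SgB : ℝ := ∑ j, (inner ℝ (Kinf (g j)) (g j) : ℝ) with hSgBdef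
    have hSgBle : SgB ≤ b := sum_inner_le_posTrace_toReal hKinf hposKinf hg
    set ε₂ : ℝ := min (ε₁ / (m + 1)) (ε' / (4 * ((m:ℝ) ^ 2 + 1))) with hε₂def
    have hε₂pos : 0 < ε₂ := lt_min (by positivity) (by positivity)
    have hev1 : ∀ᶠ n in atTop, hsNorm (K n - Kinf) ≤ ENNReal.ofReal ε₂ := by
      rw [ENNReal.tendsto_nhds_zero] at h2
      exact h2 _ (ENNReal.ofReal_pos.mpr hε₂pos)
    have h3' : Tendsto (fun n => (posTrace (K n)).toReal) atTop (nhds b) :=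
      (ENNReal.tendsto_toReal hposKinf).comp h3
    have hev2 : ∀ᶠ n in atTop, |(posTrace (K n)).toReal - b| < ε₁ := by
      obtain ⟨N, hN⟩ := Metric.tendsto_atTop.mp h3' ε₁ hε₁pos
      exact Filter.eventually_atTop.mpr ⟨N, fun n hn => by
        have hd := hN n hn
        rwa [Real.dist_eq] at hd⟩
    filter_upwards [hev1, hev2] with n hn1 hn2
    set a : ℝ := (posTrace (K n)).toReal with hadef
    have ha0 : 0 ≤ a := ENNReal.toReal_nonneg
    have hTb : ∀ x y : H, ‖x‖ = 1 → ‖y‖ = 1 → |(inner ℝ ((K n - Kinf) x) y : ℝ)| ≤ ε₂ :=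
      fun x y hx hy => abs_inner_le_of_hsNorm_le hε₂pos.le hn1 hx hy
    have hbound := traceNorm_sub_le_bound (hK n) hKinf (hposK n) hposKinf hg hε₂pos.le hTb
    refine hbound.trans (ENNReal.ofReal_le_ofReal ?_)
    set SgA : ℝ := ∑ j, (inner ℝ ((K n) (g j)) (g j) : ℝ) with hSgAdef
    set s1 : ℝ := Real.sqrt ε₁ with hs1def
    have hs1nn : 0 ≤ s1 := Real.sqrt_nonneg _
    have hs1sq : s1 ^ 2 = ε₁ := Real.sq_sqrt hε₁pos.le
    have hs1le1 : s1 ≤ 1 := by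
      rw [hs1def, show (1:ℝ) = Real.sqrt 1 by rw [Real.sqrt_one]]
      exact Real.sqrt_le_sqrt hε₁le1
    have hε₁s1 : ε₁ ≤ s1 := by nlinarith
    have hs1le : s1 ≤ ε' / (16 * (sb + 1)) := by
      have h1 : ε₁ ≤ (ε' / (16 * (sb + 1))) ^ 2 := min_le_right _ _
      have h2' := Real.sqrt_le_sqrt h1
      rwa [Real.sqrt_sq (by positivity)] at h2'
    have hSgAB : SgB - SgA ≤ (m:ℝ) * ε₂ := by
      have hterm : ∀ j, (inner ℝ (Kinf (g j)) (g j) : ℝ) - (inner ℝ ((K n) (g j)) (g j) : ℝ) ≤ ε₂ := by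
        intro j
        have habs := hTb (g j) (g j) (hg.1 j) (hg.1 j)
        have heq : (inner ℝ ((K n - Kinf) (g j)) (g j) : ℝ)
            = (inner ℝ ((K n) (g j)) (g j) : ℝ) - (inner ℝ (Kinf (g j)) (g j) : ℝ) := by
          simp [ContinuousLinearMap.sub_apply, inner_sub_left]
        rw [heq] at habs
        linarith [(abs_le.mp habs).1]
      calc SgB - SgA
          = ∑ j, ((inner ℝ (Kinf (g j)) (g j) : ℝ) - (inner ℝ ((K n) (g j)) (g j) : ℝ)) := by
            rw [hSgBdef, hSgAdef, Finset.sum_sub_distrib]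
        _ ≤ ∑ _j, ε₂ := Finset.sum_le_sum fun j _ => hterm j
        _ = (m:ℝ) * ε₂ := by
            simp [Finset.sum_const, Finset.card_univ, nsmul_eq_mul]
    have hmε₂ : (m:ℝ) * ε₂ ≤ ε₁ := by
      have h1 : ε₂ ≤ ε₁ / (m + 1) := min_le_left _ _
      have h2' : (m:ℝ) * ε₂ ≤ (m:ℝ) * (ε₁ / (m + 1)) :=
        mul_le_mul_of_nonneg_left h1 (Nat.cast_nonneg m)
      have h3'' : (m:ℝ) * (ε₁ / (m + 1)) ≤ ε₁ := by
        rw [mul_comm, div_mul_eq_mul_div, div_le_iff₀ (by positivity)]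
        nlinarith [hε₁pos.le]
      linarith
    have han : a ≤ b + ε₁ := by
      have := abs_lt.mp hn2
      linarith [this.2]
    have hanb : a ≤ b + 1 := by linarith
    have hgoodB : b - SgB < ε₁ := hgood
    have hsAle : a - SgA ≤ 3 * ε₁ := by linarith
    have hsBle : b - SgB ≤ ε₁ := hgoodB.le
    have hsB0' : 0 ≤ b - SgB := by linarith
    have hsqa : Real.sqrt a ≤ sb := by
      rw [hsbdef]
      exact Real.sqrt_le_sqrt hanb
    have hsqb : Real.sqrt b ≤ sb := by
      rw [hsbdef]
      exact Real.sqrt_le_sqrt (by linarith)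
    have hsqsA : Real.sqrt (a - SgA) ≤ 2 * s1 := by
      have h4 : Real.sqrt (4 * ε₁) = 2 * s1 := by
        rw [show (4:ℝ) * ε₁ = (2 * s1) ^ 2 by nlinarith]
        exact Real.sqrt_sq (by positivity)
      calc Real.sqrt (a - SgA) ≤ Real.sqrt (4 * ε₁) := Real.sqrt_le_sqrt (by linarith)
        _ = 2 * s1 := h4
    have hsqsB : Real.sqrt (b - SgB) ≤ s1 := by
      rw [hs1def]
      exact Real.sqrt_le_sqrt hsBle
    have hm2ε₂ : (m:ℝ) ^ 2 * ε₂ ≤ ε' / 4 := by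
      have h1 : ε₂ ≤ ε' / (4 * ((m:ℝ) ^ 2 + 1)) := min_le_right _ _
      have h2' : (m:ℝ) ^ 2 * ε₂ ≤ (m:ℝ) ^ 2 * (ε' / (4 * ((m:ℝ) ^ 2 + 1))) :=
        mul_le_mul_of_nonneg_left h1 (by positivity)
      have h3'' : (m:ℝ) ^ 2 * (ε' / (4 * ((m:ℝ) ^ 2 + 1))) ≤ ε' / 4 := by
        rw [mul_comm, div_mul_eq_mul_div, div_le_div_iff₀ (by positivity) (by norm_num)]
        nlinarith [hε'pos.le, sq_nonneg ((m:ℝ))]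
      linarith
    have hP1 : Real.sqrt a * Real.sqrt (a - SgA) ≤ sb * (2 * s1) :=
      mul_le_mul hsqa hsqsA (Real.sqrt_nonneg _) hsb0
    have hP2 : Real.sqrt b * Real.sqrt (b - SgB) ≤ sb * s1 :=
      mul_le_mul hsqb hsqsB (Real.sqrt_nonneg _) hsb0
    have hsum4 : (a - SgA) + (b - SgB) ≤ 4 * s1 := by nlinarith
    have hfin2 : (6 * sb + 4) * (ε' / (16 * (sb + 1))) ≤ ε' / 2 := by
      rw [mul_div_assoc', div_le_div_iff₀ (by positivity) (by norm_num)]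
      nlinarith [mul_nonneg hε'pos.le hsb0]
    have hfin1 : (6 * sb + 4) * s1 ≤ (6 * sb + 4) * (ε' / (16 * (sb + 1))) :=
      mul_le_mul_of_nonneg_left hs1le (by positivity)
    nlinarith [hP1, hP2, hsum4, hm2ε₂, hfin1, hfin2]
end

section
/- Let U ⊂ ℝ^d be a compact set, H = L²(U), and σ : ℝ → ℝ continuous with σ(x)² ≤ A(1 + |x|²). Then the map f ↦ C_f, where (C_f g)(x) = σ(f(x)) ∫_U σ(f(y)) g(y) dy, is continuous from (H, ‖·‖_H) into the space of non-negative self-adjoint trace-class operators equipped with the trace norm ‖·‖₁. -/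
open Filter MeasureTheory Topology
open scoped ENNReal

lemma sum_abs_inner_mul_inner_le {H : Type*} [NormedAddCommGroup H] [InnerProductSpace ℝ H]
    {n : ℕ} {e f : Fin n → H} (he : Orthonormal ℝ e) (hf : Orthonormal ℝ f) (u v : H) :
    ∑ i, |(inner ℝ u (e i) : ℝ)| * |(inner ℝ v (f i) : ℝ)| ≤ ‖u‖ * ‖v‖ := by
  have hcs := Finset.sum_mul_sq_le_sq_mul_sq Finset.univ
    (fun i => |(inner ℝ u (e i) : ℝ)|) (fun i => |(inner ℝ v (f i) : ℝ)|)
  have hbe : ∑ i, |(inner ℝ u (e i) : ℝ)| ^ 2 ≤ ‖u‖ ^ 2 := by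
    have := he.sum_inner_products_le (s := Finset.univ) u
    simpa [Real.norm_eq_abs, real_inner_comm] using this
  have hbf : ∑ i, |(inner ℝ v (f i) : ℝ)| ^ 2 ≤ ‖v‖ ^ 2 := by
    have := hf.sum_inner_products_le (s := Finset.univ) v
    simpa [Real.norm_eq_abs, real_inner_comm] using this
  have hsum_nonneg : (0:ℝ) ≤ ∑ i, |(inner ℝ u (e i) : ℝ)| * |(inner ℝ v (f i) : ℝ)| :=
    Finset.sum_nonneg fun i _ => mul_nonneg (abs_nonneg _) (abs_nonneg _)
  have hP : (0:ℝ) ≤ ∑ i, |(inner ℝ u (e i) : ℝ)| ^ 2 :=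
    Finset.sum_nonneg fun i _ => sq_nonneg _
  have h1 : (∑ i, |(inner ℝ u (e i) : ℝ)| * |(inner ℝ v (f i) : ℝ)|) ^ 2 ≤ (‖u‖ * ‖v‖) ^ 2 := by
    refine hcs.trans ?_
    rw [mul_pow]
    exact mul_le_mul hbe hbf (Finset.sum_nonneg fun i _ => sq_nonneg _) (sq_nonneg _)
  calc ∑ i, |(inner ℝ u (e i) : ℝ)| * |(inner ℝ v (f i) : ℝ)|
      = Real.sqrt ((∑ i, |(inner ℝ u (e i) : ℝ)| * |(inner ℝ v (f i) : ℝ)|) ^ 2) :=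
        (Real.sqrt_sq hsum_nonneg).symm
    _ ≤ Real.sqrt ((‖u‖ * ‖v‖) ^ 2) := Real.sqrt_le_sqrt h1
    _ = ‖u‖ * ‖v‖ := Real.sqrt_sq (mul_nonneg (norm_nonneg _) (norm_nonneg _))

lemma traceNorm_rankOne_sub_le {H : Type*} [NormedAddCommGroup H] [InnerProductSpace ℝ H]
    (a b : H) :
    traceNorm ((innerSL ℝ a).smulRight a - (innerSL ℝ b).smulRight b)
      ≤ ENNReal.ofReal (‖a - b‖ * ‖a‖ + ‖b‖ * ‖a - b‖) := by
  refine iSup_le fun n => iSup_le fun e => iSup_le fun f => iSup_le fun he => iSup_le fun hf => ?_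
  have key : ∀ i : Fin n,
      (inner ℝ (((innerSL ℝ a).smulRight a - (innerSL ℝ b).smulRight b) (e i)) (f i) : ℝ)
        = inner ℝ (a - b) (e i) * inner ℝ a (f i) + inner ℝ b (e i) * inner ℝ (a - b) (f i) := by
    intro i
    simp only [ContinuousLinearMap.sub_apply, ContinuousLinearMap.smulRight_apply,
      innerSL_apply_apply, inner_sub_left, inner_sub_right, real_inner_smul_left]
    ring
  calc ∑ i, (‖(inner ℝ (((innerSL ℝ a).smulRight a - (innerSL ℝ b).smulRight b) (e i)) (f i) : ℝ)‖₊ : ℝ≥0∞)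
      = ENNReal.ofReal (∑ i, ‖(inner ℝ (((innerSL ℝ a).smulRight a
          - (innerSL ℝ b).smulRight b) (e i)) (f i) : ℝ)‖) := by
        rw [ENNReal.ofReal_sum_of_nonneg fun i _ => norm_nonneg _]
        simp [← enorm_eq_nnnorm, Real.enorm_eq_ofReal_abs]
    _ ≤ ENNReal.ofReal (‖a - b‖ * ‖a‖ + ‖b‖ * ‖a - b‖) := by
        refine ENNReal.ofReal_le_ofReal ?_
        calc ∑ i, ‖(inner ℝ (((innerSL ℝ a).smulRight a - (innerSL ℝ b).smulRight b) (e i)) (f i) : ℝ)‖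
            ≤ ∑ i, (|(inner ℝ (a-b) (e i) : ℝ)| * |(inner ℝ a (f i) : ℝ)|
                + |(inner ℝ b (e i) : ℝ)| * |(inner ℝ (a-b) (f i) : ℝ)|) := by
              refine Finset.sum_le_sum fun i _ => ?_
              rw [key i, Real.norm_eq_abs]
              calc |(inner ℝ (a-b) (e i) : ℝ) * inner ℝ a (f i) + (inner ℝ b (e i) : ℝ) * inner ℝ (a-b) (f i)|
                  ≤ |(inner ℝ (a-b) (e i) : ℝ) * inner ℝ a (f i)| + |(inner ℝ b (e i) : ℝ) * inner ℝ (a-b) (f i)| :=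
                    abs_add_le _ _
                _ = _ := by rw [abs_mul, abs_mul]
          _ = (∑ i, |(inner ℝ (a-b) (e i) : ℝ)| * |(inner ℝ a (f i) : ℝ)|)
                + ∑ i, |(inner ℝ b (e i) : ℝ)| * |(inner ℝ (a-b) (f i) : ℝ)| := Finset.sum_add_distrib
          _ ≤ ‖a - b‖ * ‖a‖ + ‖b‖ * ‖a - b‖ :=
              add_le_add (sum_abs_inner_mul_inner_le he hf _ _) (sum_abs_inner_mul_inner_le he hf _ _)


lemma unifIntegrable_of_abs_le {α : Type*} [MeasurableSpace α] {μ : Measure α}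
    {F G : ℕ → α → ℝ} (hF : ∀ n, AEStronglyMeasurable (F n) μ)
    (C : ℝ) (hC : 0 ≤ C)
    (hbound : ∀ n x, |G n x| ≤ C + C * |F n x|)
    (hui : UnifIntegrable F 2 μ) : UnifIntegrable G 2 μ := by
  intro ε hε
  set ε' : ℝ := ε / (2 * (C + 1)) with hε'def
  have hε' : 0 < ε' := div_pos hε (by linarith)
  have hkey : (C + 1) * ε' = ε / 2 := by
    rw [hε'def]; field_simp
  have hCε' : C * ε' ≤ ε / 2 := by
    calc C * ε' ≤ (C + 1) * ε' := mul_le_mul_of_nonneg_right (by linarith) hε'.le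
      _ = ε / 2 := hkey
  obtain ⟨δ₁, hδ₁, h₁⟩ := hui hε'
  refine ⟨min δ₁ (ε' ^ 2), lt_min hδ₁ (by positivity), fun i s hs hμs => ?_⟩
  have hμs₁ : μ s ≤ ENNReal.ofReal δ₁ :=
    hμs.trans (ENNReal.ofReal_le_ofReal (min_le_left _ _))
  have hμs₂ : μ s ≤ ENNReal.ofReal (ε' ^ 2) :=
    hμs.trans (ENNReal.ofReal_le_ofReal (min_le_right _ _))
  have hmono : eLpNorm (s.indicator (G i)) 2 μ
      ≤ eLpNorm ((s.indicator fun _ => C) + (s.indicator fun x => C * |F i x|)) 2 μ := by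
    refine eLpNorm_mono fun x => ?_
    by_cases hx : x ∈ s
    · simp only [Pi.add_apply, Set.indicator_of_mem hx, Real.norm_eq_abs]
      exact (hbound i x).trans (le_abs_self _)
    · simp [Set.indicator_of_notMem hx]
  have hadd : eLpNorm ((s.indicator fun _ => C) + (s.indicator fun x => C * |F i x|)) 2 μ
      ≤ eLpNorm (s.indicator fun _ => C) 2 μ + eLpNorm (s.indicator fun x => C * |F i x|) 2 μ := by
    refine eLpNorm_add_le ?_ ?_ one_le_two
    · exact (aestronglyMeasurable_const).indicator hs
    · exact ((aestronglyMeasurable_const.mul (hF i).norm)).indicator hs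
  have hconst : eLpNorm (s.indicator fun _ => C) 2 μ ≤ ENNReal.ofReal (ε / 2) := by
    rw [eLpNorm_indicator_const hs two_ne_zero ENNReal.ofNat_ne_top]
    have h2 : (2 : ℝ≥0∞).toReal = 2 := by simp
    rw [h2]
    calc (‖C‖₊ : ℝ≥0∞) * μ s ^ (1 / 2 : ℝ)
        ≤ ENNReal.ofReal C * ENNReal.ofReal (ε' ^ 2) ^ (1 / 2 : ℝ) := by
          refine mul_le_mul ?_ (ENNReal.rpow_le_rpow hμs₂ (by norm_num)) zero_le zero_le
          rw [← enorm_eq_nnnorm, ← ofReal_norm, Real.norm_eq_abs, abs_of_nonneg hC]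
      _ = ENNReal.ofReal C * ENNReal.ofReal ε' := by
          rw [ENNReal.ofReal_rpow_of_nonneg (by positivity) (by norm_num)]
          congr 1
          rw [← Real.rpow_natCast ε' 2, ← Real.rpow_mul hε'.le]
          norm_num
      _ = ENNReal.ofReal (C * ε') := (ENNReal.ofReal_mul hC).symm
      _ ≤ ENNReal.ofReal (ε / 2) := by
          exact ENNReal.ofReal_le_ofReal hCε'
  have hFpart : eLpNorm (s.indicator fun x => C * |F i x|) 2 μ ≤ ENNReal.ofReal (ε / 2) := by
    have heq : (s.indicator fun x => C * |F i x|) = C • fun x => ‖s.indicator (F i) x‖ := by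
      funext x
      by_cases hx : x ∈ s <;>
        simp [Set.indicator_of_mem, Set.indicator_of_notMem, hx, Real.norm_eq_abs]
    rw [heq, eLpNorm_const_smul, eLpNorm_norm]
    calc (‖C‖₊ : ℝ≥0∞) * eLpNorm (s.indicator (F i)) 2 μ
        ≤ ENNReal.ofReal C * ENNReal.ofReal ε' := by
          refine mul_le_mul ?_ (h₁ i s hs hμs₁) zero_le zero_le
          rw [← enorm_eq_nnnorm, ← ofReal_norm, Real.norm_eq_abs, abs_of_nonneg hC]
      _ = ENNReal.ofReal (C * ε') := (ENNReal.ofReal_mul hC).symm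
      _ ≤ ENNReal.ofReal (ε / 2) := by
          exact ENNReal.ofReal_le_ofReal hCε'
  calc eLpNorm (s.indicator (G i)) 2 μ
      ≤ _ := hmono
    _ ≤ _ := hadd
    _ ≤ ENNReal.ofReal (ε / 2) + ENNReal.ofReal (ε / 2) := add_le_add hconst hFpart
    _ = ENNReal.ofReal ε := by rw [← ENNReal.ofReal_add (by linarith) (by linarith)]; norm_num

set_option maxHeartbeats 1000000 in
lemma sf_tendsto
    (d : ℕ) (U : Set (EuclideanSpace ℝ (Fin d)))
    (hUcompact : IsCompact U) (hUmeas : MeasurableSet U)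
    (σ : ℝ → ℝ) (hσcont : Continuous σ) (A : ℝ)
    (hgrowth : ∀ x : ℝ, σ x ^ 2 ≤ A * (1 + |x| ^ 2))
    (f : ℕ → Lp ℝ 2 ((volume : Measure (EuclideanSpace ℝ (Fin d))).restrict U))
    (flim : Lp ℝ 2 ((volume : Measure (EuclideanSpace ℝ (Fin d))).restrict U))
    (sf : ℕ → Lp ℝ 2 ((volume : Measure (EuclideanSpace ℝ (Fin d))).restrict U))
    (sflim : Lp ℝ 2 ((volume : Measure (EuclideanSpace ℝ (Fin d))).restrict U))
    (hsf : ∀ n, (sf n : EuclideanSpace ℝ (Fin d) → ℝ)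
      =ᵐ[(volume : Measure (EuclideanSpace ℝ (Fin d))).restrict U] fun x => σ (f n x))
    (hsflim : (sflim : EuclideanSpace ℝ (Fin d) → ℝ)
      =ᵐ[(volume : Measure (EuclideanSpace ℝ (Fin d))).restrict U] fun x => σ (flim x))
    (hfconv : Tendsto f atTop (nhds flim)) :
    Tendsto sf atTop (nhds sflim) := by
  haveI : IsFiniteMeasure ((volume : Measure (EuclideanSpace ℝ (Fin d))).restrict U) := by
    constructor
    rw [Measure.restrict_apply_univ]
    exact hUcompact.measure_lt_top
  -- growth bound
  have hA : 0 ≤ A := by have := hgrowth 0; nlinarith [sq_nonneg (σ 0)]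
  set C : ℝ := Real.sqrt A with hCdef
  have hC : 0 ≤ C := Real.sqrt_nonneg A
  have habs : ∀ x : ℝ, |σ x| ≤ C + C * |x| := by
    intro x
    have h1 : σ x ^ 2 ≤ (C + C * |x|) ^ 2 := by
      have : (C + C * |x|) ^ 2 = A * (1 + |x|) ^ 2 := by
        rw [hCdef]
        rw [show (Real.sqrt A + Real.sqrt A * |x|) ^ 2
          = Real.sqrt A ^ 2 * (1 + |x|) ^ 2 by ring, Real.sq_sqrt hA]
      rw [this]
      refine (hgrowth x).trans ?_
      nlinarith [abs_nonneg x]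
    have h2 : 0 ≤ C + C * |x| := by positivity
    calc |σ x| = Real.sqrt (σ x ^ 2) := (Real.sqrt_sq_eq_abs _).symm
      _ ≤ Real.sqrt ((C + C * |x|) ^ 2) := Real.sqrt_le_sqrt h1
      _ = C + C * |x| := Real.sqrt_sq h2
  -- convergence of f in eLpNorm
  have hfe : Tendsto (fun n => eLpNorm (⇑(f n) - ⇑flim) 2 ((volume : Measure (EuclideanSpace ℝ (Fin d))).restrict U)) atTop (𝓝 0) :=
    (Lp.tendsto_Lp_iff_tendsto_eLpNorm' f flim).mp hfconv
  have hFmem : ∀ n, MemLp (⇑(f n)) 2 ((volume : Measure (EuclideanSpace ℝ (Fin d))).restrict U) := fun n => Lp.memLp _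
  have huiF : UnifIntegrable (fun n => ⇑(f n)) 2 ((volume : Measure (EuclideanSpace ℝ (Fin d))).restrict U) :=
    unifIntegrable_of_tendsto_Lp one_le_two ENNReal.ofNat_ne_top hFmem (Lp.memLp flim) hfe
  have hinM : TendstoInMeasure ((volume : Measure (EuclideanSpace ℝ (Fin d))).restrict U) (fun n => ⇑(f n)) atTop ⇑flim :=
    tendstoInMeasure_of_tendsto_eLpNorm two_ne_zero (fun n => (hFmem n).aestronglyMeasurable)
      (Lp.memLp flim).aestronglyMeasurable hfe
  set G : ℕ → EuclideanSpace ℝ (Fin d) → ℝ := fun n x => σ (f n x) with hGdef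
  set Ginf : EuclideanSpace ℝ (Fin d) → ℝ := fun x => σ (flim x) with hGinfdef
  have hGmeas : ∀ n, AEStronglyMeasurable (G n) ((volume : Measure (EuclideanSpace ℝ (Fin d))).restrict U) :=
    fun n => (Lp.memLp (sf n)).aestronglyMeasurable.congr (hsf n)
  have hGinfmem : MemLp Ginf 2 ((volume : Measure (EuclideanSpace ℝ (Fin d))).restrict U) := (Lp.memLp sflim).ae_eq hsflim
  have huiG : UnifIntegrable G 2 ((volume : Measure (EuclideanSpace ℝ (Fin d))).restrict U) := by
    refine unifIntegrable_of_abs_le (fun n => (hFmem n).aestronglyMeasurable) C hC ?_ huiF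
    intro n x
    exact habs (f n x)
  have key : Tendsto (fun n => eLpNorm (G n - Ginf) 2 ((volume : Measure (EuclideanSpace ℝ (Fin d))).restrict U)) atTop (𝓝 0) := by
    refine tendsto_of_subseq_tendsto fun ns hns => ?_
    have hsub : TendstoInMeasure ((volume : Measure (EuclideanSpace ℝ (Fin d))).restrict U) (fun k => ⇑(f (ns k))) atTop ⇑flim :=
      fun ε hε => (hinM ε hε).comp hns
    obtain ⟨ms, hms, hae⟩ := hsub.exists_seq_tendsto_ae
    refine ⟨ms, tendsto_Lp_finite_of_tendsto_ae one_le_two ENNReal.ofNat_ne_top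
      (fun k => hGmeas _) hGinfmem ?_ ?_⟩
    · intro ε hε
      obtain ⟨δ, hδ, h⟩ := huiG hε
      exact ⟨δ, hδ, fun i s hs hμs => h _ s hs hμs⟩
    · filter_upwards [hae] with x hx
      exact (hσcont.tendsto (flim x)).comp hx
  have hsfe : Tendsto (fun n => eLpNorm (⇑(sf n) - ⇑sflim) 2 ((volume : Measure (EuclideanSpace ℝ (Fin d))).restrict U)) atTop (𝓝 0) := by
    have heq : ∀ n, eLpNorm (⇑(sf n) - ⇑sflim) 2 ((volume : Measure (EuclideanSpace ℝ (Fin d))).restrict U) = eLpNorm (G n - Ginf) 2 ((volume : Measure (EuclideanSpace ℝ (Fin d))).restrict U) :=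
      fun n => eLpNorm_congr_ae ((hsf n).sub hsflim)
    simpa only [heq] using key
  exact (Lp.tendsto_Lp_iff_tendsto_eLpNorm' sf sflim).mpr hsfe


set_option maxHeartbeats 1000000 in
/-- Let `U ⊆ ℝ^d` be compact, `H = L²(U)`, and `σ : ℝ → ℝ` continuous with
`σ(x)² ≤ A(1+|x|²)`. The map `f ↦ C_f`, where `C_f g = ⟪σ∘f, g⟫ • (σ∘f)`
(i.e. `(C_f g)(x) = σ(f(x)) ∫_U σ(f(y)) g(y) dy`), is continuous from `H`
into the trace-class operators with the trace norm: if `f n → f` in `L²(U)` then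
`‖C_{f n} − C_f‖₁ → 0`. -/
theorem rankOne_continuous_in_traceNorm
    (d : ℕ) (U : Set (EuclideanSpace ℝ (Fin d)))
    (hUcompact : IsCompact U) (hUmeas : MeasurableSet U)
    (σ : ℝ → ℝ) (hσcont : Continuous σ) (A : ℝ)
    (hgrowth : ∀ x : ℝ, σ x ^ 2 ≤ A * (1 + |x| ^ 2))
    (f : ℕ → Lp ℝ 2 ((volume : Measure (EuclideanSpace ℝ (Fin d))).restrict U))
    (flim : Lp ℝ 2 ((volume : Measure (EuclideanSpace ℝ (Fin d))).restrict U))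
    (sf : ℕ → Lp ℝ 2 ((volume : Measure (EuclideanSpace ℝ (Fin d))).restrict U))
    (sflim : Lp ℝ 2 ((volume : Measure (EuclideanSpace ℝ (Fin d))).restrict U))
    (hsf : ∀ n, (sf n : EuclideanSpace ℝ (Fin d) → ℝ)
      =ᵐ[(volume : Measure (EuclideanSpace ℝ (Fin d))).restrict U] fun x => σ (f n x))
    (hsflim : (sflim : EuclideanSpace ℝ (Fin d) → ℝ)
      =ᵐ[(volume : Measure (EuclideanSpace ℝ (Fin d))).restrict U] fun x => σ (flim x))
    (hfconv : Tendsto f atTop (nhds flim)) :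
    Tendsto (fun n => traceNorm ((innerSL ℝ (sf n)).smulRight (sf n)
      - (innerSL ℝ sflim).smulRight sflim)) atTop (nhds 0) := by
  have hLp : Tendsto sf atTop (nhds sflim) :=
    sf_tendsto d U hUcompact hUmeas σ hσcont A hgrowth f flim sf sflim hsf hsflim hfconv
  have h1 : Tendsto (fun n => ‖sf n - sflim‖) atTop (𝓝 0) := by
    rw [← tendsto_iff_norm_sub_tendsto_zero] at *
    exact hLp
  have h2 : Tendsto (fun n => ‖sf n‖) atTop (𝓝 ‖sflim‖) :=
    (continuous_norm.tendsto sflim).comp hLp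
  have hnorm : Tendsto (fun n => ‖sf n - sflim‖ * ‖sf n‖ + ‖sflim‖ * ‖sf n - sflim‖)
      atTop (𝓝 0) := by
    have := (h1.mul h2).add ((tendsto_const_nhds (x := ‖sflim‖)).mul h1)
    simpa using this
  have hupper : Tendsto (fun n => ENNReal.ofReal
      (‖sf n - sflim‖ * ‖sf n‖ + ‖sflim‖ * ‖sf n - sflim‖)) atTop (𝓝 0) := by
    have := ENNReal.tendsto_ofReal hnorm
    rwa [ENNReal.ofReal_zero] at this
  refine tendsto_of_tendsto_of_tendsto_of_le_of_le tendsto_const_nhds hupper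
    (fun n => zero_le) (fun n => traceNorm_rankOne_sub_le (sf n) sflim)
end

section
/- Let 𝒦 : U² → ℝ be a continuous, symmetric, positive semidefinite kernel on a compact metric space U with finite Borel measure μ. Then the integral operator K on L²(U,μ) with kernel 𝒦 is trace-class and tr(K) = ∫_U 𝒦(x,x) dμ(x). -/
open Filter MeasureTheory
open scoped ENNReal
set_option linter.unusedSectionVars false
set_option linter.unusedVariables false

section Mercer

variable {α : Type*} [MetricSpace α] [CompactSpace α]
    [MeasurableSpace α] [BorelSpace α]
    {μ : Measure α} [IsFiniteMeasure μ]
    {𝒦 : α × α → ℝ}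

lemma mercer_bound (hcont : Continuous 𝒦) : ∃ C : ℝ, 0 ≤ C ∧ ∀ p, |𝒦 p| ≤ C := by
  obtain ⟨C, hC⟩ := isCompact_univ.exists_bound_of_continuousOn hcont.continuousOn
  refine ⟨max C 0, le_max_right _ _, fun p => ?_⟩
  rw [← Real.norm_eq_abs]
  exact (hC p (Set.mem_univ p)).trans (le_max_left _ _)

lemma mercer_L1 (f : Lp ℝ 2 μ) : Integrable (f : α → ℝ) μ :=
  ((Lp.memLp f).mono_exponent (by norm_num)).integrable le_rfl

lemma mercer_integrable (hcont : Continuous 𝒦) (f g : Lp ℝ 2 μ) :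
    Integrable (fun z : α × α => 𝒦 z * ((g : α → ℝ) z.1 * (f : α → ℝ) z.2)) (μ.prod μ) := by
  obtain ⟨C, hC0, hC⟩ := mercer_bound hcont
  exact ((mercer_L1 g).mul_prod (mercer_L1 f)).bdd_mul hcont.aestronglyMeasurable
    (c := C) (Filter.Eventually.of_forall fun x => by simpa [Real.norm_eq_abs] using hC x)

lemma mercer_integrable_y (hcont : Continuous 𝒦) (f : Lp ℝ 2 μ) (x : α) :
    Integrable (fun y => 𝒦 (x, y) * (f : α → ℝ) y) μ := by
  obtain ⟨C, hC0, hC⟩ := mercer_bound hcont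
  exact (mercer_L1 f).bdd_mul ((hcont.comp (Continuous.prodMk_right x)).aestronglyMeasurable)
    (c := C) (Filter.Eventually.of_forall fun y => by simpa [Real.norm_eq_abs] using hC (x, y))

lemma mercer_inner_eq (hcont : Continuous 𝒦)
    (T : Lp ℝ 2 μ →L[ℝ] Lp ℝ 2 μ)
    (hT : ∀ g : Lp ℝ 2 μ, (T g : α → ℝ) =ᵐ[μ] fun x => ∫ y, 𝒦 (x, y) * g y ∂μ)
    (f g : Lp ℝ 2 μ) :
    (inner ℝ (T f) g : ℝ) = ∫ x, (∫ y, 𝒦 (x, y) * f y ∂μ) * g x ∂μ := by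
  rw [MeasureTheory.L2.inner_def]
  refine integral_congr_ae ?_
  filter_upwards [hT f] with x hx
  simp [hx, RCLike.inner_apply, mul_comm]
lemma mercer_eq_I (hcont : Continuous 𝒦) (f g : Lp ℝ 2 μ) :
    ∫ x, (∫ y, 𝒦 (x, y) * f y ∂μ) * g x ∂μ
      = ∫ x, ∫ y, 𝒦 (x, y) * ((g : α → ℝ) x * (f : α → ℝ) y) ∂μ ∂μ := by
  refine integral_congr_ae (Filter.Eventually.of_forall fun x => ?_)
  show (∫ y, 𝒦 (x, y) * f y ∂μ) * g x = ∫ y, 𝒦 (x, y) * ((g : α → ℝ) x * (f : α → ℝ) y) ∂μ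
  rw [← integral_mul_const]
  refine integral_congr_ae (Filter.Eventually.of_forall fun y => ?_)
  ring

lemma mercer_symm_I (hcont : Continuous 𝒦) (hsymm : ∀ x y, 𝒦 (x, y) = 𝒦 (y, x))
    (f g : Lp ℝ 2 μ) :
    ∫ x, ∫ y, 𝒦 (x, y) * ((g : α → ℝ) x * (f : α → ℝ) y) ∂μ ∂μ
      = ∫ x, ∫ y, 𝒦 (x, y) * ((f : α → ℝ) x * (g : α → ℝ) y) ∂μ ∂μ := by
  rw [MeasureTheory.integral_integral_swap (mercer_integrable hcont f g)]
  refine integral_congr_ae (Filter.Eventually.of_forall fun x => ?_)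
  refine integral_congr_ae (Filter.Eventually.of_forall fun y => ?_)
  show 𝒦 (y, x) * ((g : α → ℝ) y * (f : α → ℝ) x) = 𝒦 (x, y) * ((f : α → ℝ) x * (g : α → ℝ) y)
  rw [hsymm y x]; ring

lemma mercer_inner_symm (hcont : Continuous 𝒦) (hsymm : ∀ x y, 𝒦 (x, y) = 𝒦 (y, x))
    (T : Lp ℝ 2 μ →L[ℝ] Lp ℝ 2 μ)
    (hT : ∀ g : Lp ℝ 2 μ, (T g : α → ℝ) =ᵐ[μ] fun x => ∫ y, 𝒦 (x, y) * g y ∂μ)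
    (f g : Lp ℝ 2 μ) :
    (inner ℝ (T f) g : ℝ) = (inner ℝ (T g) f : ℝ) := by
  rw [mercer_inner_eq hcont T hT, mercer_inner_eq hcont T hT,
    mercer_eq_I hcont f g, mercer_eq_I hcont g f, mercer_symm_I hcont hsymm f g]

lemma mercer_inner_nonneg (hcont : Continuous 𝒦)
    (hpsd : ∀ g : Lp ℝ 2 μ, 0 ≤ ∫ x, (∫ y, 𝒦 (x, y) * g x * g y ∂μ) ∂μ)
    (T : Lp ℝ 2 μ →L[ℝ] Lp ℝ 2 μ)
    (hT : ∀ g : Lp ℝ 2 μ, (T g : α → ℝ) =ᵐ[μ] fun x => ∫ y, 𝒦 (x, y) * g y ∂μ)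
    (f : Lp ℝ 2 μ) : 0 ≤ (inner ℝ (T f) f : ℝ) := by
  rw [mercer_inner_eq hcont T hT, mercer_eq_I hcont f f]
  refine le_trans (hpsd f) (le_of_eq (integral_congr_ae
    (Filter.Eventually.of_forall fun x => integral_congr_ae
      (Filter.Eventually.of_forall fun y => by ring))))
lemma mercer_partition (δ : ℝ) (hδ : 0 < δ) :
    ∃ (n : ℕ) (A : Fin n → Set α) (t : Fin n → α),
      (∀ k, MeasurableSet (A k)) ∧ (Pairwise (Function.onFun Disjoint A)) ∧
      (⋃ k, A k) = Set.univ ∧ ∀ k, A k ⊆ Metric.ball (t k) δ := by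
  classical
  obtain ⟨s, hs⟩ := isCompact_univ.elim_finite_subcover (fun x : α => Metric.ball x δ)
    (fun x => Metric.isOpen_ball) (fun x _ => Set.mem_iUnion.2 ⟨x, Metric.mem_ball_self hδ⟩)
  set l := s.toList with hl
  set n := l.length with hn
  set f : ℕ → Set α := fun i => if h : i < n then Metric.ball (l.get ⟨i, h⟩) δ else ∅ with hf
  have hfm : ∀ i, MeasurableSet (f i) := by
    intro i
    by_cases h : i < n
    · simp only [hf, dif_pos h]; exact Metric.isOpen_ball.measurableSet
    · simp only [hf, dif_neg h]; exact MeasurableSet.empty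
  refine ⟨n, fun k => disjointed f k, fun k => l.get k, ?_, ?_, ?_, ?_⟩
  · exact fun k => MeasurableSet.disjointed hfm k
  · intro k k' hkk'
    exact disjoint_disjointed f (fun h => hkk' (Fin.val_injective h))
  · apply Set.eq_univ_of_univ_subset
    intro x _
    have hx : x ∈ ⋃ i, f i := by
      have := hs (Set.mem_univ x)
      rw [Set.mem_iUnion₂] at this
      obtain ⟨y, hy, hxy⟩ := this
      obtain ⟨i, hi⟩ := List.mem_iff_get.1 ((Finset.mem_toList).2 hy)
      refine Set.mem_iUnion.2 ⟨i.1, ?_⟩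
      simp only [hf, dif_pos (show (i:ℕ) < n from i.2)]
      rw [show (⟨i.1, i.2⟩ : Fin n) = i from rfl, hi]
      exact hxy
    rw [← iUnion_disjointed] at hx
    obtain ⟨i, hi⟩ := Set.mem_iUnion.1 hx
    have hin : i < n := by
      by_contra h
      have : disjointed f i ⊆ f i := disjointed_subset f i
      simp only [hf, dif_neg h] at this
      exact this hi
    exact Set.mem_iUnion.2 ⟨⟨i, hin⟩, hi⟩
  · intro k
    refine (disjointed_subset f k).trans ?_
    simp only [hf, dif_pos k.2]
    exact subset_rfl
noncomputable def uEl {α : Type*} [MeasurableSpace α] (μ : Measure α) {A : Set α}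
    (hA : MeasurableSet A) (hμ : μ A ≠ ⊤) : Lp ℝ 2 μ :=
  (Real.sqrt (μ A).toReal)⁻¹ • indicatorConstLp 2 hA hμ (1:ℝ)

lemma uEl_coe {α : Type*} [MeasurableSpace α] (μ : Measure α) {A : Set α}
    (hA : MeasurableSet A) (hμ : μ A ≠ ⊤) :
    (uEl μ hA hμ : α → ℝ) =ᵐ[μ]
      fun x => (Real.sqrt (μ A).toReal)⁻¹ * Set.indicator A (fun _ => (1:ℝ)) x := by
  filter_upwards [Lp.coeFn_smul ((Real.sqrt (μ A).toReal)⁻¹) (indicatorConstLp 2 hA hμ (1:ℝ)),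
    indicatorConstLp_coeFn (p := 2) (hs := hA) (hμs := hμ) (c := (1:ℝ))] with x h1 h2
  rw [uEl, h1, Pi.smul_apply, h2, smul_eq_mul]

lemma mercer_inner_uEl {α : Type*} [MeasurableSpace α] (μ : Measure α) {A B : Set α}
    (hA : MeasurableSet A) (hμA : μ A ≠ ⊤) (hB : MeasurableSet B) (hμB : μ B ≠ ⊤) :
    (inner ℝ (uEl μ hA hμA) (uEl μ hB hμB) : ℝ)
      = (Real.sqrt (μ A).toReal)⁻¹ * ((Real.sqrt (μ B).toReal)⁻¹ * (μ (A ∩ B)).toReal) := by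
  rw [MeasureTheory.L2.inner_def]
  have : ∫ x, (inner ℝ ((uEl μ hA hμA : α → ℝ) x) ((uEl μ hB hμB : α → ℝ) x) : ℝ) ∂μ
      = ∫ x, (Real.sqrt (μ A).toReal)⁻¹ * ((Real.sqrt (μ B).toReal)⁻¹
          * Set.indicator (A ∩ B) (fun _ => (1:ℝ)) x) ∂μ := by
    refine integral_congr_ae ?_
    filter_upwards [uEl_coe μ hA hμA, uEl_coe μ hB hμB] with x h1 h2
    rw [RCLike.inner_apply, starRingEnd_apply, star_trivial, h1, h2]
    by_cases hxA : x ∈ A <;> by_cases hxB : x ∈ B <;>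
      simp [Set.indicator_of_mem, Set.indicator_of_notMem, hxA, hxB, Set.mem_inter_iff] <;> ring
  rw [this, integral_const_mul, integral_const_mul, integral_indicator_const _ (hA.inter hB)]
  simp [smul_eq_mul, Measure.real]

lemma mercer_orthonormal {α : Type*} [MeasurableSpace α] (μ : Measure α) {n : ℕ}
    {A : Fin n → Set α} (hA : ∀ k, MeasurableSet (A k)) (hμA : ∀ k, μ (A k) ≠ ⊤)
    (hdisj : Pairwise (Function.onFun Disjoint A)) {s : Finset (Fin n)}
    (hs : ∀ k ∈ s, μ (A k) ≠ 0) :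
    Orthonormal ℝ (fun k : s => uEl μ (hA k) (hμA k)) := by
  rw [orthonormal_iff_ite]
  intro i j
  rw [mercer_inner_uEl]
  by_cases hij : i = j
  · subst hij
    simp only [if_pos rfl, Set.inter_self]
    have h0 : (μ (A i)).toReal ≠ 0 := by
      exact ENNReal.toReal_ne_zero.2 ⟨hs i i.2, hμA i⟩
    have hpos : 0 < (μ (A i)).toReal := lt_of_le_of_ne ENNReal.toReal_nonneg (Ne.symm h0)
    rw [if_pos trivial, ← mul_assoc, ← mul_inv, Real.mul_self_sqrt hpos.le, inv_mul_cancel₀ h0]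
  · have : A i.1 ∩ A j.1 = ∅ := by
      have hne : (i : Fin n) ≠ (j : Fin n) := fun h => hij (Subtype.ext h)
      exact Set.disjoint_iff_inter_eq_empty.1 (hdisj hne)
    simp [this, hij]
lemma mercer_intOn (hcont : Continuous 𝒦) (x : α) (A : Set α) :
    IntegrableOn (fun y => 𝒦 (x, y)) A μ := by
  obtain ⟨C, hC0, hC⟩ := mercer_bound hcont
  have hCint : IntegrableOn (fun _ : α => C) A μ :=
    integrableOn_const (measure_ne_top μ A)
  refine hCint.mono'
      ((hcont.comp (Continuous.prodMk_right x)).aestronglyMeasurable.restrict) ?_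
  exact Filter.Eventually.of_forall fun y => by simpa [Real.norm_eq_abs] using hC (x, y)

lemma mercer_cont_setIntegral (hcont : Continuous 𝒦) (A : Set α) :
    Continuous fun x => ∫ y in A, 𝒦 (x, y) ∂μ := by
  obtain ⟨C, hC0, hC⟩ := mercer_bound hcont
  refine continuous_of_dominated
    (fun x => (hcont.comp (Continuous.prodMk_right x)).aestronglyMeasurable.restrict)
    (fun x => Filter.Eventually.of_forall fun y => by
      simpa [Real.norm_eq_abs] using hC (x, y))
    (show IntegrableOn (fun _ : α => C) A μ from
      integrableOn_const (measure_ne_top μ A))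
    (Filter.Eventually.of_forall fun y =>
      hcont.comp (continuous_id.prodMk continuous_const))

lemma mercer_T_inner_uEl (hcont : Continuous 𝒦)
    (T : Lp ℝ 2 μ →L[ℝ] Lp ℝ 2 μ)
    (hT : ∀ g : Lp ℝ 2 μ, (T g : α → ℝ) =ᵐ[μ] fun x => ∫ y, 𝒦 (x, y) * g y ∂μ)
    {A : Set α} (hA : MeasurableSet A) (hμA : μ A ≠ ⊤) :
    (inner ℝ (T (uEl μ hA hμA)) (uEl μ hA hμA) : ℝ)
      = ((Real.sqrt (μ A).toReal)⁻¹)^2 * ∫ x in A, ∫ y in A, 𝒦 (x, y) ∂μ ∂μ := by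
  set c : ℝ := (Real.sqrt (μ A).toReal)⁻¹ with hc
  rw [mercer_inner_eq hcont T hT]
  have h1 : ∀ x : α, ∫ y, 𝒦 (x, y) * (uEl μ hA hμA : α → ℝ) y ∂μ
      = c * ∫ y in A, 𝒦 (x, y) ∂μ := by
    intro x
    rw [← integral_indicator hA, ← integral_const_mul]
    refine integral_congr_ae ?_
    filter_upwards [uEl_coe μ hA hμA] with y hy
    rw [hy]
    by_cases hyA : y ∈ A <;>
      simp [Set.indicator_of_mem, Set.indicator_of_notMem, hyA] <;> ring
  have h2 : ∫ x, (∫ y, 𝒦 (x, y) * (uEl μ hA hμA : α → ℝ) y ∂μ) * (uEl μ hA hμA : α → ℝ) x ∂μ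
      = c^2 * ∫ x in A, ∫ y in A, 𝒦 (x, y) ∂μ ∂μ := by
    rw [← integral_indicator hA, ← integral_const_mul]
    refine integral_congr_ae ?_
    filter_upwards [uEl_coe μ hA hμA] with x hx
    rw [h1 x, hx]
    by_cases hxA : x ∈ A <;>
      simp [Set.indicator_of_mem, Set.indicator_of_notMem, hxA] <;> ring
  rw [h2]

lemma mercer_diag_est (hcont : Continuous 𝒦)
    (T : Lp ℝ 2 μ →L[ℝ] Lp ℝ 2 μ)
    (hT : ∀ g : Lp ℝ 2 μ, (T g : α → ℝ) =ᵐ[μ] fun x => ∫ y, 𝒦 (x, y) * g y ∂μ)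
    {A : Set α} (hA : MeasurableSet A) (hμA0 : μ A ≠ 0) {t : α} {δ ε : ℝ}
    (hε : 0 ≤ ε) (hδ : 0 < δ) (hAball : A ⊆ Metric.ball t δ)
    (hmod : ∀ p q : α × α, dist p q < 2*δ → |𝒦 p - 𝒦 q| ≤ ε) :
    |(inner ℝ (T (uEl μ hA (measure_ne_top μ A))) (uEl μ hA (measure_ne_top μ A)) : ℝ)
        - ∫ x in A, 𝒦 (x, x) ∂μ| ≤ ε * (μ A).toReal := by
  set m : ℝ := (μ A).toReal with hm
  have hm0 : m ≠ 0 := ENNReal.toReal_ne_zero.2 ⟨hμA0, measure_ne_top μ A⟩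
  have hmpos : 0 < m := lt_of_le_of_ne ENNReal.toReal_nonneg (Ne.symm hm0)
  have hcsq : ((Real.sqrt m)⁻¹)^2 = m⁻¹ := by
    rw [← Real.sqrt_inv]; exact Real.sq_sqrt (inv_nonneg.2 hmpos.le)
  rw [mercer_T_inner_uEl hcont T hT hA (measure_ne_top μ A), hcsq]
  -- inner difference bound
  have hdistAA : ∀ x ∈ A, ∀ y ∈ A, dist (x, y) ((x, x) : α × α) < 2*δ := by
    intro x hx y hy
    have h1 : dist y x < 2*δ := by
      calc dist y x ≤ dist y t + dist t x := dist_triangle y t x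
      _ < δ + δ := by
          refine add_lt_add (hAball hy) ?_
          rw [dist_comm]; exact hAball hx
      _ = 2*δ := by ring
    rw [Prod.dist_eq]
    simp only [dist_self]
    exact max_lt (by linarith) h1
  have hinner : ∀ x ∈ A, |(∫ y in A, 𝒦 (x, y) ∂μ) - m * 𝒦 (x, x)| ≤ ε * m := by
    intro x hx
    have : (∫ y in A, 𝒦 (x, y) ∂μ) - m * 𝒦 (x, x)
        = ∫ y in A, (𝒦 (x, y) - 𝒦 (x, x)) ∂μ := by
      rw [integral_sub (mercer_intOn hcont x A) (show IntegrableOn (fun _ : α => 𝒦 (x, x)) A μ from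
        integrableOn_const (measure_ne_top μ A)), setIntegral_const, smul_eq_mul]; rfl
    rw [this, ← Real.norm_eq_abs]
    refine norm_setIntegral_le_of_norm_le_const (measure_lt_top μ A) ?_
    · intro y hy
      rw [Real.norm_eq_abs]
      exact hmod _ _ (hdistAA x hx y hy)
  -- outer bound
  have houter : |(∫ x in A, ∫ y in A, 𝒦 (x, y) ∂μ ∂μ) - m * ∫ x in A, 𝒦 (x, x) ∂μ|
      ≤ (ε * m) * m := by
    have hdiagint : IntegrableOn (fun x => 𝒦 (x, x)) A μ := by
      obtain ⟨C, hC0, hC⟩ := mercer_bound hcont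
      refine (show IntegrableOn (fun _ : α => C) A μ from
          integrableOn_const (measure_ne_top μ A)).mono'
        ((hcont.comp (continuous_id.prodMk continuous_id)).aestronglyMeasurable.restrict) ?_
      exact Filter.Eventually.of_forall fun x => by simpa [Real.norm_eq_abs] using hC (x, x)
    have hIint : IntegrableOn (fun x => ∫ y in A, 𝒦 (x, y) ∂μ) A μ := by
      obtain ⟨C, hC0, hC⟩ := mercer_bound hcont
      refine (show IntegrableOn (fun _ : α => C * (μ A).toReal) A μ from
          integrableOn_const (measure_ne_top μ A)).mono'
        ((mercer_cont_setIntegral hcont A).aestronglyMeasurable.restrict)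
        (Filter.Eventually.of_forall fun x => ?_)
      · rw [Real.norm_eq_abs, ← Real.norm_eq_abs]
        exact norm_setIntegral_le_of_norm_le_const (measure_lt_top μ A)
          (fun y _ => by rw [Real.norm_eq_abs]; exact hC (x, y))
    have : (∫ x in A, ∫ y in A, 𝒦 (x, y) ∂μ ∂μ) - m * ∫ x in A, 𝒦 (x, x) ∂μ
        = ∫ x in A, ((∫ y in A, 𝒦 (x, y) ∂μ) - m * 𝒦 (x, x)) ∂μ := by
      rw [integral_sub hIint (hdiagint.const_mul m), MeasureTheory.integral_const_mul]
    rw [this, ← Real.norm_eq_abs]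
    refine norm_setIntegral_le_of_norm_le_const (measure_lt_top μ A)
      (fun x hx => by rw [Real.norm_eq_abs]; exact hinner x hx)
  -- combine
  have : m⁻¹ * (∫ x in A, ∫ y in A, 𝒦 (x, y) ∂μ ∂μ) - ∫ x in A, 𝒦 (x, x) ∂μ
      = m⁻¹ * ((∫ x in A, ∫ y in A, 𝒦 (x, y) ∂μ ∂μ) - m * ∫ x in A, 𝒦 (x, x) ∂μ) := by
    field_simp
  rw [this, abs_mul, abs_inv, abs_of_pos hmpos]
  calc m⁻¹ * |(∫ x in A, ∫ y in A, 𝒦 (x, y) ∂μ ∂μ) - m * ∫ x in A, 𝒦 (x, x) ∂μ|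
      ≤ m⁻¹ * ((ε * m) * m) := by
        exact mul_le_mul_of_nonneg_left houter (inv_nonneg.2 hmpos.le)
    _ = ε * m := by field_simp
lemma mercer_expand_inner {H : Type*} [NormedAddCommGroup H] [InnerProductSpace ℝ H]
    (T : H →L[ℝ] H) {κ : Type*} [Fintype κ] (u : κ → H) (x y : κ → ℝ) :
    (inner ℝ (T (∑ k, x k • u k)) (∑ l, y l • u l) : ℝ)
      = ∑ k, ∑ l, x k * (y l * (inner ℝ (T (u k)) (u l) : ℝ)) := by
  rw [map_sum, sum_inner]
  refine Finset.sum_congr rfl fun k _ => ?_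
  rw [_root_.map_smul, real_inner_smul_left, inner_sum]
  rw [Finset.mul_sum]
  refine Finset.sum_congr rfl fun l _ => ?_
  rw [real_inner_smul_right]

lemma mercer_matrix_bound {H : Type*} [NormedAddCommGroup H] [InnerProductSpace ℝ H]
    (T : H →L[ℝ] H) (hpos : ∀ f, 0 ≤ (inner ℝ (T f) f : ℝ))
    (hsym : ∀ f g, (inner ℝ (T f) g : ℝ) = (inner ℝ (T g) f : ℝ))
    {m : ℕ} {e : Fin m → H} (he : Orthonormal ℝ e)
    {κ : Type*} [Fintype κ] [DecidableEq κ] {u : κ → H} (hu : Orthonormal ℝ u) :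
    ∑ i, (inner ℝ (T (∑ k, (inner ℝ (e i) (u k) : ℝ) • u k))
        (∑ k, (inner ℝ (e i) (u k) : ℝ) • u k) : ℝ)
      ≤ ∑ k, (inner ℝ (T (u k)) (u k) : ℝ) := by
  classical
  set M : Matrix κ κ ℝ := Matrix.of fun k l => (inner ℝ (T (u k)) (u l) : ℝ) with hMdef
  have hM : M.PosSemidef := by
    refine Matrix.PosSemidef.of_dotProduct_mulVec_nonneg ?_ ?_
    · ext k l
      simp only [Matrix.conjTranspose_apply, hMdef, Matrix.of_apply, star_trivial]
      exact hsym (u l) (u k)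
    · intro x
      have : (dotProduct (star x) (M.mulVec x))
          = (inner ℝ (T (∑ k, x k • u k)) (∑ l, x l • u l) : ℝ) := by
        rw [mercer_expand_inner]
        simp only [dotProduct, Matrix.mulVec, star_trivial, hMdef, Matrix.of_apply]
        refine Finset.sum_congr rfl fun k _ => ?_
        rw [Finset.mul_sum]
        exact Finset.sum_congr rfl fun l _ => by ring
      rw [this]
      exact hpos _
  obtain ⟨B, hB⟩ : ∃ B : Matrix κ κ ℝ, M = B.conjTranspose * B := by
    open MatrixOrder in
    obtain ⟨X, hX, -, hXM⟩ := CFC.exists_sqrt_of_isSelfAdjoint_of_quasispectrumRestricts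
      hM.isHermitian (QuasispectrumRestricts.nnreal_of_nonneg hM.nonneg)
    exact ⟨X, by rw [← Matrix.star_eq_conjTranspose, hX.star_eq]; exact hXM.symm⟩
  have hMB : ∀ k l, M k l = ∑ j, B j k * B j l := by
    intro k l
    rw [hB, Matrix.mul_apply]
    refine Finset.sum_congr rfl fun j _ => ?_
    simp [Matrix.conjTranspose_apply]
  set w : κ → H := fun j => ∑ k, B j k • u k with hwdef
  have hew : ∀ (i : Fin m) (j : κ), (inner ℝ (e i) (w j) : ℝ) = ∑ k, B j k * (inner ℝ (e i) (u k) : ℝ) := by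
    intro i j
    rw [hwdef, inner_sum]
    refine Finset.sum_congr rfl fun k _ => ?_
    rw [real_inner_smul_right]
  have hkey : ∀ i : Fin m,
      (inner ℝ (T (∑ k, (inner ℝ (e i) (u k) : ℝ) • u k)) (∑ k, (inner ℝ (e i) (u k) : ℝ) • u k) : ℝ)
        = ∑ j, (inner ℝ (e i) (w j) : ℝ)^2 := by
    intro i
    set c : κ → ℝ := fun k => (inner ℝ (e i) (u k) : ℝ) with hc
    rw [mercer_expand_inner]
    have h1 : ∀ j : κ, (inner ℝ (e i) (w j) : ℝ)^2
        = ∑ k, ∑ l, (B j k * c k) * (B j l * c l) := by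
      intro j
      rw [hew, sq, Finset.sum_mul_sum]
    calc ∑ k, ∑ l, c k * (c l * (inner ℝ (T (u k)) (u l) : ℝ))
        = ∑ k, ∑ l, ∑ j, (B j k * c k) * (B j l * c l) := by
          refine Finset.sum_congr rfl fun k _ => Finset.sum_congr rfl fun l _ => ?_
          rw [show (inner ℝ (T (u k)) (u l) : ℝ) = M k l from rfl, hMB k l,
            Finset.mul_sum, Finset.mul_sum]
          exact Finset.sum_congr rfl fun j _ => by ring
      _ = ∑ k, ∑ j, ∑ l, (B j k * c k) * (B j l * c l) :=
          Finset.sum_congr rfl fun k _ => Finset.sum_comm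
      _ = ∑ j, ∑ k, ∑ l, (B j k * c k) * (B j l * c l) := Finset.sum_comm
      _ = ∑ j, (inner ℝ (e i) (w j) : ℝ)^2 :=
          Finset.sum_congr rfl fun j _ => (h1 j).symm
  have hbessel : ∀ j : κ, ∑ i, (inner ℝ (e i) (w j) : ℝ)^2 ≤ (inner ℝ (w j) (w j) : ℝ) := by
    intro j
    have := he.sum_inner_products_le (w j) (s := Finset.univ)
    rw [← real_inner_self_eq_norm_sq] at this
    refine le_trans (le_of_eq ?_) this
    refine Finset.sum_congr rfl fun i _ => ?_
    rw [Real.norm_eq_abs, sq_abs]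
  have hww : ∀ j : κ, (inner ℝ (w j) (w j) : ℝ) = ∑ k, (B j k)^2 := by
    intro j
    rw [hwdef]
    rw [hu.inner_sum (fun k => B j k) (fun k => B j k) Finset.univ]
    refine Finset.sum_congr rfl fun k _ => ?_
    simp [sq]
  calc ∑ i, (inner ℝ (T (∑ k, (inner ℝ (e i) (u k) : ℝ) • u k))
        (∑ k, (inner ℝ (e i) (u k) : ℝ) • u k) : ℝ)
      = ∑ i, ∑ j, (inner ℝ (e i) (w j) : ℝ)^2 := Finset.sum_congr rfl fun i _ => hkey i
    _ = ∑ j, ∑ i, (inner ℝ (e i) (w j) : ℝ)^2 := Finset.sum_comm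
    _ ≤ ∑ j, (inner ℝ (w j) (w j) : ℝ) := Finset.sum_le_sum fun j _ => hbessel j
    _ = ∑ j, ∑ k, (B j k)^2 := Finset.sum_congr rfl fun j _ => hww j
    _ = ∑ k, ∑ j, (B j k)^2 := Finset.sum_comm
    _ = ∑ k, (inner ℝ (T (u k)) (u k) : ℝ) := by
        refine Finset.sum_congr rfl fun k _ => ?_
        rw [show (inner ℝ (T (u k)) (u k) : ℝ) = M k k from rfl, hMB k k]
        refine Finset.sum_congr rfl fun j _ => ?_
        ring
lemma mercer_inner_single {H : Type*} [NormedAddCommGroup H] [InnerProductSpace ℝ H]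
    {κ : Type*} [Fintype κ] [DecidableEq κ] {u : κ → H} (hu : Orthonormal ℝ u)
    (b : κ → ℝ) (k : κ) : (inner ℝ (∑ l, b l • u l) (u k) : ℝ) = b k := by
  rw [sum_inner]
  rw [Finset.sum_eq_single_of_mem k (Finset.mem_univ k)]
  · rw [real_inner_smul_left, (orthonormal_iff_ite.1 hu k k), if_pos rfl, mul_one]
  · intro l _ hlk
    rw [real_inner_smul_left, (orthonormal_iff_ite.1 hu l k), if_neg hlk, mul_zero]

lemma mercer_proj_best {H : Type*} [NormedAddCommGroup H] [InnerProductSpace ℝ H]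
    {κ : Type*} [Fintype κ] [DecidableEq κ] {u : κ → H} (hu : Orthonormal ℝ u)
    (e : H) (b : κ → ℝ) :
    ‖e - ∑ k, (inner ℝ e (u k) : ℝ) • u k‖ ≤ ‖e - ∑ k, b k • u k‖ := by
  set v : H := ∑ k, (inner ℝ e (u k) : ℝ) • u k with hv
  set w : H := ∑ k, b k • u k with hw
  have hvw : v - w = ∑ k, ((inner ℝ e (u k) : ℝ) - b k) • u k := by
    rw [hv, hw, ← Finset.sum_sub_distrib]
    exact Finset.sum_congr rfl fun k _ => (sub_smul _ _ _).symm
  have hortho : (inner ℝ (e - v) (v - w) : ℝ) = 0 := by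
    rw [hvw, inner_sum]
    refine Finset.sum_eq_zero fun k _ => ?_
    rw [real_inner_smul_right, inner_sub_left, mercer_inner_single hu _ k]
    ring
  have hpyth : ‖e - w‖^2 = ‖e - v‖^2 + ‖v - w‖^2 := by
    have : e - w = (e - v) + (v - w) := by abel
    rw [this, norm_add_sq_real, hortho]
    ring
  have h1 : ‖e - v‖^2 ≤ ‖e - w‖^2 := by
    rw [hpyth]; nlinarith [norm_nonneg (v - w)]
  nlinarith [norm_nonneg (e - v), norm_nonneg (e - w)]

lemma mercer_v_norm_le {H : Type*} [NormedAddCommGroup H] [InnerProductSpace ℝ H]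
    {κ : Type*} [Fintype κ] [DecidableEq κ] {u : κ → H} (hu : Orthonormal ℝ u) (e : H) :
    ‖∑ k, (inner ℝ e (u k) : ℝ) • u k‖ ≤ ‖e‖ := by
  have h1 : ‖∑ k, (inner ℝ e (u k) : ℝ) • u k‖^2 = ∑ k, (inner ℝ e (u k) : ℝ)^2 := by
    rw [← real_inner_self_eq_norm_sq, hu.inner_sum]
    exact Finset.sum_congr rfl fun k _ => by simp [sq]
  have h2 : ∑ k, (inner ℝ e (u k) : ℝ)^2 ≤ ‖e‖^2 := by
    refine le_trans (le_of_eq ?_) (hu.sum_inner_products_le e (s := Finset.univ))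
    refine Finset.sum_congr rfl fun k _ => ?_
    rw [Real.norm_eq_abs, sq_abs, real_inner_comm]
  nlinarith [norm_nonneg (∑ k, (inner ℝ e (u k) : ℝ) • u k), norm_nonneg e]

lemma mercer_inner_perturb {H : Type*} [NormedAddCommGroup H] [InnerProductSpace ℝ H]
    (T : H →L[ℝ] H) {e v : H} (he : ‖e‖ = 1) (hv : ‖v‖ ≤ 1) :
    |(inner ℝ (T e) e : ℝ) - (inner ℝ (T v) v : ℝ)| ≤ 2 * ‖T‖ * ‖e - v‖ := by
  have hid : (inner ℝ (T e) e : ℝ) - (inner ℝ (T v) v : ℝ)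
      = (inner ℝ (T (e - v)) e : ℝ) + (inner ℝ (T v) (e - v) : ℝ) := by
    rw [map_sub, inner_sub_left, inner_sub_right]
    ring
  rw [hid]
  have h1 : |(inner ℝ (T (e - v)) e : ℝ)| ≤ ‖T‖ * ‖e - v‖ := by
    refine le_trans (abs_real_inner_le_norm _ _) ?_
    rw [he, mul_one]
    exact T.le_opNorm _
  have h2 : |(inner ℝ (T v) (e - v) : ℝ)| ≤ ‖T‖ * ‖e - v‖ := by
    refine le_trans (abs_real_inner_le_norm _ _) ?_
    calc ‖T v‖ * ‖e - v‖ ≤ (‖T‖ * ‖v‖) * ‖e - v‖ :=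
          mul_le_mul_of_nonneg_right (T.le_opNorm v) (norm_nonneg _)
      _ ≤ ‖T‖ * ‖e - v‖ := by
          have h3 : ‖T‖ * ‖v‖ ≤ ‖T‖ := by
            nlinarith [norm_nonneg T, norm_nonneg v]
          exact mul_le_mul_of_nonneg_right h3 (norm_nonneg _)
  calc |(inner ℝ (T (e - v)) e : ℝ) + (inner ℝ (T v) (e - v) : ℝ)|
      ≤ |(inner ℝ (T (e - v)) e : ℝ)| + |(inner ℝ (T v) (e - v) : ℝ)| := abs_add_le _ _
    _ ≤ 2 * ‖T‖ * ‖e - v‖ := by linarith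

lemma mercer_exists_pos_min {m : ℕ} (δi : Fin m → ℝ) (h : ∀ i, 0 < δi i) (a : ℝ) (ha : 0 < a) :
    ∃ δ, 0 < δ ∧ δ ≤ a ∧ ∀ i, δ ≤ δi i := by
  induction m with
  | zero => exact ⟨a, ha, le_rfl, fun i => i.elim0⟩
  | succ k ih =>
    obtain ⟨δ, h1, h2, h3⟩ := ih (fun i => δi i.succ) (fun i => h _)
    refine ⟨min δ (δi 0), lt_min h1 (h 0), (min_le_left _ _).trans h2, fun i => ?_⟩
    refine Fin.cases (min_le_right _ _) (fun j => (min_le_left _ _).trans (h3 j)) i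

lemma mercer_coeFn_sum {α : Type*} [MeasurableSpace α] {μ : Measure α} {ι : Type*}
    (s : Finset ι) (f : ι → Lp ℝ 2 μ) :
    (((∑ i ∈ s, f i : Lp ℝ 2 μ) : Lp ℝ 2 μ) : α → ℝ) =ᵐ[μ] fun x => ∑ i ∈ s, f i x := by
  classical
  induction s using Finset.induction_on with
  | empty => simp only [Finset.sum_empty]; exact Lp.coeFn_zero ℝ 2 μ
  | insert _ _ hnot ih =>
    rw [Finset.sum_insert hnot]
    filter_upwards [Lp.coeFn_add _ (∑ i ∈ _, f i), ih] with x h1 h2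
    rw [h1, Pi.add_apply, h2, Finset.sum_insert hnot]
lemma mercer_span_approx {n : ℕ} {A : Fin n → Set α} {t : Fin n → α}
    (hA : ∀ k, MeasurableSet (A k)) (hdisj : Pairwise (Function.onFun Disjoint A))
    (hcover : (⋃ k, A k) = Set.univ) {δ : ℝ} (hball : ∀ k, A k ⊆ Metric.ball (t k) δ)
    {s : Finset (Fin n)} (hs : ∀ k : Fin n, k ∈ s ↔ μ (A k) ≠ 0)
    (g : C(α, ℝ)) {η : ℝ} (hη : 0 ≤ η)
    (hmod : ∀ x y : α, dist x y < δ → |g x - g y| ≤ η) :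
    ∃ b : s → ℝ,
      ‖ContinuousMap.toLp 2 μ ℝ g - ∑ k : s, b k • uEl μ (hA k.1) (measure_ne_top μ (A k.1))‖
        ≤ (measureUnivNNReal μ : ℝ) ^ ((2 : ℝ≥0∞).toReal)⁻¹ * η := by
  classical
  refine ⟨fun k => g (t k.1) * Real.sqrt ((μ (A k.1)).toReal), ?_⟩
  set b : s → ℝ := fun k => g (t k.1) * Real.sqrt ((μ (A k.1)).toReal) with hb
  set W : α → ℝ := fun x => ∑ k : s, Set.indicator (A k.1) (fun _ => g (t k.1)) x with hW
  have h2 : ∀ᵐ x ∂μ, ∀ k : s,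
      ((b k • uEl μ (hA k.1) (measure_ne_top μ (A k.1)) : Lp ℝ 2 μ) : α → ℝ) x
        = Set.indicator (A k.1) (fun _ => g (t k.1)) x := by
    rw [MeasureTheory.ae_all_iff]
    intro k
    filter_upwards [Lp.coeFn_smul (b k) (uEl μ (hA k.1) (measure_ne_top μ (A k.1))),
      uEl_coe μ (hA k.1) (measure_ne_top μ (A k.1))] with x hx1 hx2
    rw [hx1, Pi.smul_apply, hx2, smul_eq_mul]
    by_cases hxA : x ∈ A k.1
    · rw [Set.indicator_of_mem hxA, Set.indicator_of_mem hxA]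
      have hm : 0 < (μ (A k.1)).toReal :=
        lt_of_le_of_ne ENNReal.toReal_nonneg
          (Ne.symm (ENNReal.toReal_ne_zero.2 ⟨(hs k.1).1 k.2, measure_ne_top μ _⟩))
      have hsq : Real.sqrt ((μ (A k.1)).toReal) ≠ 0 :=
        ne_of_gt (Real.sqrt_pos.2 hm)
      rw [hb]
      field_simp
    · rw [Set.indicator_of_notMem hxA, Set.indicator_of_notMem hxA, mul_zero, mul_zero]
  have hco : ((ContinuousMap.toLp 2 μ ℝ g
        - ∑ k : s, b k • uEl μ (hA k.1) (measure_ne_top μ (A k.1)) : Lp ℝ 2 μ) : α → ℝ)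
      =ᵐ[μ] fun x => g x - W x := by
    filter_upwards [Lp.coeFn_sub (ContinuousMap.toLp 2 μ ℝ g)
        (∑ k : s, b k • uEl μ (hA k.1) (measure_ne_top μ (A k.1))),
      ContinuousMap.coeFn_toLp μ (𝕜 := ℝ) (p := 2) g,
      mercer_coeFn_sum (Finset.univ : Finset s)
        (fun k => b k • uEl μ (hA k.1) (measure_ne_top μ (A k.1))), h2] with x hx1 hx2 hx3 hx4
    rw [hx1, Pi.sub_apply, hx2, hx3, hW]
    congr 1
    exact Finset.sum_congr rfl fun k _ => hx4 k
  have hae_mem : ∀ᵐ x ∂μ, x ∈ ⋃ k ∈ s, A k := by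
    have hsubset : (⋃ k ∈ s, A k)ᶜ ⊆ ⋃ k ∈ {k : Fin n | k ∉ s}, A k := by
      intro x hx
      have : x ∈ ⋃ k, A k := hcover ▸ Set.mem_univ x
      obtain ⟨k, hk⟩ := Set.mem_iUnion.1 this
      by_cases hks : k ∈ s
      · exact absurd (Set.mem_biUnion hks hk) hx
      · exact Set.mem_biUnion hks hk
    have hnull : μ (⋃ k ∈ {k : Fin n | k ∉ s}, A k) = 0 := by
      refine (measure_biUnion_null_iff (Set.to_countable _)).2 fun k hk => ?_
      exact not_not.1 fun h => hk ((hs k).2 h)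
    have : μ ((⋃ k ∈ s, A k)ᶜ) = 0 := measure_mono_null hsubset hnull
    exact (measure_eq_zero_iff_ae_notMem.1 this).mono fun x hx => not_not.1 (by simpa using hx)
  refine Lp.norm_le_of_ae_bound hη ?_
  filter_upwards [hco, hae_mem] with x hx hxm
  rw [hx, Real.norm_eq_abs]
  obtain ⟨k0, hk0s, hk0⟩ := Set.mem_iUnion₂.1 hxm
  have hWx : W x = g (t k0) := by
    have hWd : W x = ∑ k : s, Set.indicator (A k.1) (fun _ => g (t k.1)) x := rfl
    rw [hWd, Finset.sum_eq_single_of_mem (⟨k0, hk0s⟩ : s) (Finset.mem_univ _)]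
    · exact Set.indicator_of_mem hk0 _
    · intro l _ hlk
      refine Set.indicator_of_notMem ?_ _
      intro hxl
      have hlne : l.1 ≠ k0 := fun h => hlk (Subtype.ext h)
      exact (Set.disjoint_left.1 (hdisj hlne)) hxl hk0
  rw [hWx]
  exact hmod x (t k0) (hball k0 hk0)
lemma mercer_diag_integrable (hcont : Continuous 𝒦) :
    Integrable (fun x => 𝒦 (x, x)) μ := by
  obtain ⟨C, hC0, hC⟩ := mercer_bound hcont
  refine (integrable_const C).mono'
    ((hcont.comp (continuous_id.prodMk continuous_id)).aestronglyMeasurable) ?_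
  exact Filter.Eventually.of_forall fun x => by simpa [Real.norm_eq_abs] using hC (x, x)

lemma mercer_sum_le (hcont : Continuous 𝒦) (hsymm : ∀ x y, 𝒦 (x, y) = 𝒦 (y, x))
    (hpsd : ∀ g : Lp ℝ 2 μ, 0 ≤ ∫ x, (∫ y, 𝒦 (x, y) * g x * g y ∂μ) ∂μ)
    (T : Lp ℝ 2 μ →L[ℝ] Lp ℝ 2 μ)
    (hT : ∀ g : Lp ℝ 2 μ, (T g : α → ℝ) =ᵐ[μ] fun x => ∫ y, 𝒦 (x, y) * g y ∂μ)
    {m : ℕ} {e : Fin m → Lp ℝ 2 μ} (he : Orthonormal ℝ e) :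
    ∑ i, (inner ℝ (T (e i)) (e i) : ℝ) ≤ ∫ x, 𝒦 (x, x) ∂μ := by
  classical
  refine le_of_forall_pos_le_add fun ε hε => ?_
  set Muniv : ℝ := (μ Set.univ).toReal with hMuniv
  have hMuniv0 : 0 ≤ Muniv := ENNReal.toReal_nonneg
  set SC : ℝ := (measureUnivNNReal μ : ℝ) ^ ((2 : ℝ≥0∞).toReal)⁻¹ with hSCdef
  have hSC : 0 ≤ SC := Real.rpow_nonneg (NNReal.coe_nonneg _) _
  set ε₂ : ℝ := ε / (2 * (Muniv + 1)) with hε₂def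
  have hε₂ : 0 < ε₂ := div_pos hε (by linarith)
  set Kc : ℝ := (m : ℕ) * (2 * ‖T‖ * (1 + SC)) with hKc
  have hKc0 : 0 ≤ Kc := by positivity
  set η : ℝ := ε / (2 * (Kc + 1)) with hηdef
  have hη : 0 < η := div_pos hε (by linarith)
  -- uniform continuity of the kernel
  obtain ⟨δK, hδK, hmodK⟩ := Metric.uniformContinuous_iff.1
    (CompactSpace.uniformContinuous_of_continuous hcont) ε₂ hε₂
  -- continuous approximations of the e i
  have hdense : ∀ i : Fin m, ∃ g : C(α, ℝ), ‖e i - ContinuousMap.toLp 2 μ ℝ g‖ ≤ η := by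
    intro i
    have hd := ContinuousMap.toLp_denseRange (α := α) (E := ℝ) (μ := μ) (𝕜 := ℝ) (p := 2)
      (by norm_num)
    obtain ⟨g, hg⟩ := Metric.denseRange_iff.1 hd (e i) η hη
    exact ⟨g, by rw [← dist_eq_norm]; exact hg.le⟩
  choose g hg using hdense
  have hgmod : ∀ i : Fin m, ∃ δi > 0, ∀ x y : α, dist x y < δi → |g i x - g i y| ≤ η := by
    intro i
    obtain ⟨δi, hδi, hm⟩ := Metric.uniformContinuous_iff.1
      (CompactSpace.uniformContinuous_of_continuous (g i).continuous) η hη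
    exact ⟨δi, hδi, fun x y h => le_of_lt (by simpa [Real.dist_eq] using hm h)⟩
  choose δi hδi hmodi using hgmod
  obtain ⟨δ0, hδ0, hδ0K, hδ0i⟩ := mercer_exists_pos_min δi hδi δK hδK
  set δ : ℝ := δ0 / 2 with hδdef
  have hδ : 0 < δ := by positivity
  -- partition
  obtain ⟨n, A, t, hAm, hdisj, hcover, hball⟩ := mercer_partition (α := α) δ hδ
  set s : Finset (Fin n) := Finset.univ.filter (fun k => μ (A k) ≠ 0) with hsdef
  have hs : ∀ k : Fin n, k ∈ s ↔ μ (A k) ≠ 0 := by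
    intro k; simp [hsdef]
  set u : s → Lp ℝ 2 μ := fun k => uEl μ (hAm k.1) (measure_ne_top μ (A k.1)) with hudef
  have hu : Orthonormal ℝ u :=
    mercer_orthonormal μ hAm (fun k => measure_ne_top μ (A k)) hdisj (fun k hk => (hs k).1 hk)
  set v : Fin m → Lp ℝ 2 μ := fun i => ∑ k : s, (inner ℝ (e i) (u k) : ℝ) • u k with hvdef
  have hpos := mercer_inner_nonneg hcont hpsd T hT
  have hsym := mercer_inner_symm hcont hsymm T hT
  have hmatrix : ∑ i, (inner ℝ (T (v i)) (v i) : ℝ) ≤ ∑ k : s, (inner ℝ (T (u k)) (u k) : ℝ) :=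
    mercer_matrix_bound T hpos hsym he hu
  -- approximation bound
  have happrox : ∀ i, ‖e i - v i‖ ≤ (1 + SC) * η := by
    intro i
    obtain ⟨b, hb⟩ := mercer_span_approx hAm hdisj hcover hball hs (g i) hη.le
      (fun x y hxy => hmodi i x y (lt_of_lt_of_le hxy (le_trans (by rw [hδdef]; linarith) (hδ0i i))))
    calc ‖e i - v i‖ ≤ ‖e i - ∑ k : s, b k • u k‖ := mercer_proj_best hu (e i) b
      _ ≤ ‖e i - ContinuousMap.toLp 2 μ ℝ (g i)‖
          + ‖ContinuousMap.toLp 2 μ ℝ (g i) - ∑ k : s, b k • u k‖ := by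
            rw [show e i - ∑ k : s, b k • u k
              = (e i - ContinuousMap.toLp 2 μ ℝ (g i))
                + (ContinuousMap.toLp 2 μ ℝ (g i) - ∑ k : s, b k • u k) by abel]
            exact norm_add_le _ _
      _ ≤ η + SC * η := add_le_add (hg i) hb
      _ = (1 + SC) * η := by ring
  have hperturb : ∀ i, (inner ℝ (T (e i)) (e i) : ℝ)
      ≤ (inner ℝ (T (v i)) (v i) : ℝ) + 2 * ‖T‖ * ((1 + SC) * η) := by
    intro i
    have h1 : ‖v i‖ ≤ 1 := by
      refine le_trans (mercer_v_norm_le hu (e i)) ?_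
      rw [he.1 i]
    have h2 := mercer_inner_perturb T (he.1 i) h1
    have h3 : 2 * ‖T‖ * ‖e i - v i‖ ≤ 2 * ‖T‖ * ((1 + SC) * η) := by
      refine mul_le_mul_of_nonneg_left (happrox i) (by positivity)
    have := abs_le.1 (le_trans h2 h3)
    linarith [this.1, this.2]
  -- diagonal estimate
  have hdiag : ∑ k : s, (inner ℝ (T (u k)) (u k) : ℝ) ≤ (∫ x, 𝒦 (x, x) ∂μ) + ε₂ * Muniv := by
    have hmod2 : ∀ p q : α × α, dist p q < 2*δ → |𝒦 p - 𝒦 q| ≤ ε₂ := by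
      intro p q hpq
      have : dist p q < δK := lt_of_lt_of_le (by rw [hδdef] at hpq; linarith) hδ0K
      exact le_of_lt (by simpa [Real.dist_eq] using hmodK this)
    have hest : ∀ k : s, (inner ℝ (T (u k)) (u k) : ℝ)
        ≤ (∫ x in A k.1, 𝒦 (x, x) ∂μ) + ε₂ * (μ (A k.1)).toReal := by
      intro k
      have := mercer_diag_est hcont T hT (hAm k.1) ((hs k.1).1 k.2) hε₂.le hδ (hball k.1) hmod2
      have h' := (abs_le.1 this).2
      linarith
    calc ∑ k : s, (inner ℝ (T (u k)) (u k) : ℝ)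
        ≤ ∑ k : s, ((∫ x in A k.1, 𝒦 (x, x) ∂μ) + ε₂ * (μ (A k.1)).toReal) :=
          Finset.sum_le_sum fun k _ => hest k
      _ = (∑ k : s, ∫ x in A k.1, 𝒦 (x, x) ∂μ) + ε₂ * ∑ k : s, (μ (A k.1)).toReal := by
          rw [Finset.sum_add_distrib, Finset.mul_sum]
      _ ≤ (∫ x, 𝒦 (x, x) ∂μ) + ε₂ * Muniv := by
          have hUnull : μ ((⋃ k ∈ s, A k)ᶜ) = 0 := by
            have hsubset : (⋃ k ∈ s, A k)ᶜ ⊆ ⋃ k ∈ {k : Fin n | k ∉ s}, A k := by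
              intro x hx
              have : x ∈ ⋃ k, A k := hcover ▸ Set.mem_univ x
              obtain ⟨k, hk⟩ := Set.mem_iUnion.1 this
              by_cases hks : k ∈ s
              · exact absurd (Set.mem_biUnion hks hk) hx
              · exact Set.mem_biUnion hks hk
            refine measure_mono_null hsubset ?_
            refine (measure_biUnion_null_iff (Set.to_countable _)).2 fun k hk => ?_
            exact not_not.1 fun h => hk ((hs k).2 h)
          have h1 : (∑ k : s, ∫ x in A k.1, 𝒦 (x, x) ∂μ) = ∫ x, 𝒦 (x, x) ∂μ := by
            rw [Finset.sum_coe_sort s (fun k => ∫ x in A k, 𝒦 (x, x) ∂μ)]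
            rw [← integral_biUnion_finset s (fun k _ => hAm k)
              (fun k _ l _ hkl => hdisj hkl)
              (fun k _ => (mercer_diag_integrable hcont).integrableOn)]
            rw [setIntegral_congr_set (MeasureTheory.ae_eq_univ.2 hUnull), setIntegral_univ]
          have h2 : ∑ k : s, (μ (A k.1)).toReal ≤ Muniv := by
            rw [Finset.sum_coe_sort s (fun k => (μ (A k)).toReal)]
            rw [← ENNReal.toReal_sum (fun k _ => measure_ne_top μ _)]
            refine ENNReal.toReal_mono (measure_ne_top μ _) ?_
            rw [← measure_biUnion_finset
              (fun k _ l _ hkl => hdisj hkl) (fun k _ => hAm k)]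
            exact measure_mono (Set.subset_univ _)
          rw [h1]
          have := mul_le_mul_of_nonneg_left h2 hε₂.le
          linarith
  -- combine
  have hsum : ∑ i, (inner ℝ (T (e i)) (e i) : ℝ)
      ≤ (∑ i, (inner ℝ (T (v i)) (v i) : ℝ)) + Kc * η := by
    calc ∑ i, (inner ℝ (T (e i)) (e i) : ℝ)
        ≤ ∑ i, ((inner ℝ (T (v i)) (v i) : ℝ) + 2 * ‖T‖ * ((1 + SC) * η)) :=
          Finset.sum_le_sum fun i _ => hperturb i
      _ = (∑ i, (inner ℝ (T (v i)) (v i) : ℝ)) + Kc * η := by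
          rw [Finset.sum_add_distrib, Finset.sum_const, Finset.card_univ, Fintype.card_fin]
          rw [hKc]
          ring
  have hfin1 : ε₂ * Muniv ≤ ε / 2 := by
    rw [hε₂def]
    rw [div_mul_eq_mul_div, div_le_div_iff₀ (by linarith) (by norm_num)]
    nlinarith
  have hfin2 : Kc * η ≤ ε / 2 := by
    rw [hηdef]
    rw [mul_div_assoc']  -- Kc * (ε / d) = Kc * ε / d
    rw [div_le_div_iff₀ (by linarith) (by norm_num)]
    nlinarith
  linarith [hsum, hmatrix, hdiag]
lemma mercer_exists_family (hcont : Continuous 𝒦)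
    (T : Lp ℝ 2 μ →L[ℝ] Lp ℝ 2 μ)
    (hT : ∀ g : Lp ℝ 2 μ, (T g : α → ℝ) =ᵐ[μ] fun x => ∫ y, 𝒦 (x, y) * g y ∂μ)
    {ε : ℝ} (hε : 0 < ε) :
    ∃ (m : ℕ) (e : Fin m → Lp ℝ 2 μ), Orthonormal ℝ e ∧
      (∫ x, 𝒦 (x, x) ∂μ) - ε ≤ ∑ i, (inner ℝ (T (e i)) (e i) : ℝ) := by
  classical
  set Muniv : ℝ := (μ Set.univ).toReal with hMuniv
  have hMuniv0 : 0 ≤ Muniv := ENNReal.toReal_nonneg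
  set ε₂ : ℝ := ε / (Muniv + 1) with hε₂def
  have hε₂ : 0 < ε₂ := div_pos hε (by linarith)
  obtain ⟨δK, hδK, hmodK⟩ := Metric.uniformContinuous_iff.1
    (CompactSpace.uniformContinuous_of_continuous hcont) ε₂ hε₂
  set δ : ℝ := δK / 2 with hδdef
  have hδ : 0 < δ := by positivity
  obtain ⟨n, A, t, hAm, hdisj, hcover, hball⟩ := mercer_partition (α := α) δ hδ
  set s : Finset (Fin n) := Finset.univ.filter (fun k => μ (A k) ≠ 0) with hsdef
  have hs : ∀ k : Fin n, k ∈ s ↔ μ (A k) ≠ 0 := by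
    intro k; simp [hsdef]
  set u : s → Lp ℝ 2 μ := fun k => uEl μ (hAm k.1) (measure_ne_top μ (A k.1)) with hudef
  have hu : Orthonormal ℝ u :=
    mercer_orthonormal μ hAm (fun k => measure_ne_top μ (A k)) hdisj (fun k hk => (hs k).1 hk)
  set m : ℕ := Fintype.card s with hm
  set σ : Fin m ≃ s := (Fintype.equivFin s).symm with hσ
  refine ⟨m, u ∘ σ, hu.comp σ σ.injective, ?_⟩
  have hsum : ∑ i, (inner ℝ (T ((u ∘ σ) i)) ((u ∘ σ) i) : ℝ)
      = ∑ k : s, (inner ℝ (T (u k)) (u k) : ℝ) :=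
    Equiv.sum_comp σ (fun k => (inner ℝ (T (u k)) (u k) : ℝ))
  rw [hsum]
  have hmod2 : ∀ p q : α × α, dist p q < 2*δ → |𝒦 p - 𝒦 q| ≤ ε₂ := by
    intro p q hpq
    have : dist p q < δK := by rw [hδdef] at hpq; linarith
    exact le_of_lt (by simpa [Real.dist_eq] using hmodK this)
  have hest : ∀ k : s, (∫ x in A k.1, 𝒦 (x, x) ∂μ) - ε₂ * (μ (A k.1)).toReal
      ≤ (inner ℝ (T (u k)) (u k) : ℝ) := by
    intro k
    have := mercer_diag_est hcont T hT (hAm k.1) ((hs k.1).1 k.2) hε₂.le hδ (hball k.1) hmod2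
    have h' := (abs_le.1 this).1
    linarith
  have hUnull : μ ((⋃ k ∈ s, A k)ᶜ) = 0 := by
    have hsubset : (⋃ k ∈ s, A k)ᶜ ⊆ ⋃ k ∈ {k : Fin n | k ∉ s}, A k := by
      intro x hx
      have : x ∈ ⋃ k, A k := hcover ▸ Set.mem_univ x
      obtain ⟨k, hk⟩ := Set.mem_iUnion.1 this
      by_cases hks : k ∈ s
      · exact absurd (Set.mem_biUnion hks hk) hx
      · exact Set.mem_biUnion hks hk
    refine measure_mono_null hsubset ?_
    refine (measure_biUnion_null_iff (Set.to_countable _)).2 fun k hk => ?_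
    exact not_not.1 fun h => hk ((hs k).2 h)
  have h1 : (∑ k : s, ∫ x in A k.1, 𝒦 (x, x) ∂μ) = ∫ x, 𝒦 (x, x) ∂μ := by
    rw [Finset.sum_coe_sort s (fun k => ∫ x in A k, 𝒦 (x, x) ∂μ)]
    rw [← integral_biUnion_finset s (fun k _ => hAm k)
      (fun k _ l _ hkl => hdisj hkl)
      (fun k _ => (mercer_diag_integrable hcont).integrableOn)]
    rw [setIntegral_congr_set (MeasureTheory.ae_eq_univ.2 hUnull), setIntegral_univ]
  have h2 : ∑ k : s, (μ (A k.1)).toReal ≤ Muniv := by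
    rw [Finset.sum_coe_sort s (fun k => (μ (A k)).toReal)]
    rw [← ENNReal.toReal_sum (fun k _ => measure_ne_top μ _)]
    refine ENNReal.toReal_mono (measure_ne_top μ _) ?_
    rw [← measure_biUnion_finset (fun k _ l _ hkl => hdisj hkl) (fun k _ => hAm k)]
    exact measure_mono (Set.subset_univ _)
  have h3 : ∑ k : s, ((∫ x in A k.1, 𝒦 (x, x) ∂μ) - ε₂ * (μ (A k.1)).toReal)
      ≤ ∑ k : s, (inner ℝ (T (u k)) (u k) : ℝ) := Finset.sum_le_sum fun k _ => hest k
  rw [Finset.sum_sub_distrib, h1, ← Finset.mul_sum] at h3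
  have h4 : ε₂ * ∑ k : s, (μ (A k.1)).toReal ≤ ε := by
    calc ε₂ * ∑ k : s, (μ (A k.1)).toReal ≤ ε₂ * Muniv :=
          mul_le_mul_of_nonneg_left h2 hε₂.le
      _ ≤ ε := by
          rw [hε₂def, div_mul_eq_mul_div, div_le_iff₀ (by linarith)]
          nlinarith
  linarith

lemma mercer_cs {H : Type*} [NormedAddCommGroup H] [InnerProductSpace ℝ H]
    (T : H →L[ℝ] H) (hpos : ∀ f, 0 ≤ (inner ℝ (T f) f : ℝ))
    (hsym : ∀ f g, (inner ℝ (T f) g : ℝ) = (inner ℝ (T g) f : ℝ)) (e f : H) :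
    |(inner ℝ (T e) f : ℝ)| ≤ ((inner ℝ (T e) e : ℝ) + (inner ℝ (T f) f : ℝ)) / 2 := by
  have hplus := hpos (e + f)
  have hminus := hpos (e - f)
  have hexp1 : (inner ℝ (T (e + f)) (e + f) : ℝ)
      = (inner ℝ (T e) e : ℝ) + 2 * (inner ℝ (T e) f : ℝ) + (inner ℝ (T f) f : ℝ) := by
    rw [map_add, inner_add_left, inner_add_right, inner_add_right, hsym f e]
    ring
  have hexp2 : (inner ℝ (T (e - f)) (e - f) : ℝ)
      = (inner ℝ (T e) e : ℝ) - 2 * (inner ℝ (T e) f : ℝ) + (inner ℝ (T f) f : ℝ) := by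
    rw [map_sub, inner_sub_left, inner_sub_right, inner_sub_right, hsym f e]
    ring
  rw [hexp1] at hplus
  rw [hexp2] at hminus
  rw [abs_le]
  constructor <;> linarith
end Mercer

/-- Mercer's theorem: if `𝒦` is a continuous, symmetric, positive semidefinite kernel on a
compact metric space `α` with finite Borel measure `μ`, then the integral operator `T` on
`L²(α, μ)` with kernel `𝒦` is trace-class and `tr T = ∫ 𝒦(x,x) dμ(x)`. -/
theorem mercer_traceClass_and_trace_eq_integral_diag
    {α : Type*} [MetricSpace α] [CompactSpace α]
    [MeasurableSpace α] [BorelSpace α]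
    (μ : Measure α) [IsFiniteMeasure μ]
    (𝒦 : α × α → ℝ) (hcont : Continuous 𝒦)
    (hsymm : ∀ x y, 𝒦 (x, y) = 𝒦 (y, x))
    (hpsd : ∀ g : Lp ℝ 2 μ, 0 ≤ ∫ x, (∫ y, 𝒦 (x, y) * g x * g y ∂μ) ∂μ)
    (T : Lp ℝ 2 μ →L[ℝ] Lp ℝ 2 μ)
    (hT : ∀ g : Lp ℝ 2 μ, (T g : α → ℝ) =ᵐ[μ] fun x => ∫ y, 𝒦 (x, y) * g y ∂μ) :
    traceNorm T ≠ ⊤ ∧ posTrace T = ENNReal.ofReal (∫ x, 𝒦 (x, x) ∂μ) := by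
  have hpos := mercer_inner_nonneg hcont hpsd T hT
  have hsym := mercer_inner_symm hcont hsymm T hT
  have hU : ∀ {m : ℕ} {e : Fin m → Lp ℝ 2 μ}, Orthonormal ℝ e →
      ∑ i, (inner ℝ (T (e i)) (e i) : ℝ) ≤ ∫ x, 𝒦 (x, x) ∂μ :=
    fun he => mercer_sum_le hcont hsymm hpsd T hT he
  constructor
  · -- trace norm is finite
    have hle : traceNorm T ≤ ENNReal.ofReal (∫ x, 𝒦 (x, x) ∂μ) := by
      rw [traceNorm]
      refine iSup_le fun n => iSup_le fun e => iSup_le fun f => iSup_le fun he =>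
        iSup_le fun hf => ?_
      have hterm : ∀ i : Fin n, (‖(inner ℝ (T (e i)) (f i) : ℝ)‖₊ : ℝ≥0∞)
          = ENNReal.ofReal |(inner ℝ (T (e i)) (f i) : ℝ)| :=
        fun i => Real.enorm_eq_ofReal_abs _
      calc ∑ i, (‖(inner ℝ (T (e i)) (f i) : ℝ)‖₊ : ℝ≥0∞)
          = ENNReal.ofReal (∑ i, |(inner ℝ (T (e i)) (f i) : ℝ)|) := by
            rw [ENNReal.ofReal_sum_of_nonneg (fun i _ => abs_nonneg _)]
            exact Finset.sum_congr rfl fun i _ => (hterm i)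
        _ ≤ ENNReal.ofReal (∫ x, 𝒦 (x, x) ∂μ) := by
            refine ENNReal.ofReal_le_ofReal ?_
            have hhalf : ∀ i : Fin n, |(inner ℝ (T (e i)) (f i) : ℝ)|
                ≤ ((inner ℝ (T (e i)) (e i) : ℝ) + (inner ℝ (T (f i)) (f i) : ℝ)) / 2 :=
              fun i => mercer_cs T hpos hsym (e i) (f i)
            have h1 : ∑ i, |(inner ℝ (T (e i)) (f i) : ℝ)|
                ≤ ((∑ i, (inner ℝ (T (e i)) (e i) : ℝ)) + ∑ i, (inner ℝ (T (f i)) (f i) : ℝ)) / 2 := by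
              rw [← Finset.sum_add_distrib, Finset.sum_div]
              exact Finset.sum_le_sum fun i _ => hhalf i
            have h2 := hU he
            have h3 := hU hf
            linarith
    exact fun h => (h ▸ hle).not_gt ENNReal.ofReal_lt_top |>.elim
  · -- trace identity
    apply le_antisymm
    · rw [posTrace]
      refine iSup_le fun n => iSup_le fun e => iSup_le fun he => ?_
      calc ∑ i, ENNReal.ofReal (inner ℝ (T (e i)) (e i) : ℝ)
          = ENNReal.ofReal (∑ i, (inner ℝ (T (e i)) (e i) : ℝ)) :=
            (ENNReal.ofReal_sum_of_nonneg (fun i _ => hpos (e i))).symm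
        _ ≤ ENNReal.ofReal (∫ x, 𝒦 (x, x) ∂μ) := ENNReal.ofReal_le_ofReal (hU he)
    · refine ENNReal.le_of_forall_pos_le_add fun ε hε _ => ?_
      obtain ⟨m, e, he, hsum⟩ := mercer_exists_family hcont T hT
        (ε := (ε : ℝ)) (by exact_mod_cast hε)
      have hle1 : ENNReal.ofReal (∫ x, 𝒦 (x, x) ∂μ)
          ≤ ENNReal.ofReal (∑ i, (inner ℝ (T (e i)) (e i) : ℝ)) + (ε : ℝ≥0∞) := by
        calc ENNReal.ofReal (∫ x, 𝒦 (x, x) ∂μ)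
            ≤ ENNReal.ofReal ((∑ i, (inner ℝ (T (e i)) (e i) : ℝ)) + (ε : ℝ)) := by
              refine ENNReal.ofReal_le_ofReal ?_
              linarith
          _ ≤ ENNReal.ofReal (∑ i, (inner ℝ (T (e i)) (e i) : ℝ)) + ENNReal.ofReal (ε : ℝ) :=
              ENNReal.ofReal_add_le
          _ = ENNReal.ofReal (∑ i, (inner ℝ (T (e i)) (e i) : ℝ)) + (ε : ℝ≥0∞) := by
              rw [ENNReal.ofReal_coe_nnreal]
      refine hle1.trans (add_le_add_left ?_ _)
      calc ENNReal.ofReal (∑ i, (inner ℝ (T (e i)) (e i) : ℝ))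
          = ∑ i, ENNReal.ofReal (inner ℝ (T (e i)) (e i) : ℝ) :=
            ENNReal.ofReal_sum_of_nonneg (fun i _ => hpos (e i))
        _ ≤ posTrace T := by
            rw [posTrace]
            have step1 : ∑ i, ENNReal.ofReal (inner ℝ (T (e i)) (e i) : ℝ)
                ≤ ⨆ (_ : Orthonormal ℝ e), ∑ i, ENNReal.ofReal (inner ℝ (T (e i)) (e i) : ℝ) :=
              le_iSup_of_le he le_rfl
            refine step1.trans ?_
            refine le_trans (le_iSup_of_le e le_rfl) (le_iSup_of_le m le_rfl)
end

section
/- Let 𝕏₁, 𝕏₂ be Polish spaces and (X_{1,n}, X_{2,n}) random elements of 𝕏₁ × 𝕏₂. Let ν_n(x, dy) be a regular conditional distribution of X_{2,n} given X_{1,n} = x. Suppose there is a measurable G : 𝕏₁ → 𝕏₂ such that whenever x_n → x, the measures ν_n(x_n, ·) converge weakly to the Dirac mass at G(x). If X_{1,n} → x₀ in probability, then (X_{1,n}, X_{2,n}) converges in probability to (x₀, G(x₀)). -/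
open Filter MeasureTheory ProbabilityTheory
open scoped ENNReal

/-- A bump function equal to 1 outside the ε-ball around c, vanishing at c. -/
lemma exists_aux_bcf {X : Type*} [MetricSpace X] (c : X) (ε : ℝ) (hε : 0 < ε) :
    ∃ g : BoundedContinuousFunction X ℝ, (∀ y, 0 ≤ g y) ∧ (∀ y, g y ≤ 1) ∧ g c = 0 ∧
      ∀ y, ε ≤ dist y c → g y = 1 := by
  refine ⟨BoundedContinuousFunction.mkOfBound
    ⟨fun y => min 1 (dist y c / ε), by fun_prop⟩ 1 ?_, ?_, ?_, ?_, ?_⟩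
  · intro x y
    simp only [ContinuousMap.coe_mk, Real.dist_eq]
    have h1 : 0 ≤ dist x c / ε := div_nonneg dist_nonneg hε.le
    have h2 : 0 ≤ dist y c / ε := div_nonneg dist_nonneg hε.le
    rw [abs_sub_le_iff]
    constructor <;>
      linarith [min_le_left (1:ℝ) (dist x c / ε), le_min zero_le_one h1,
        le_min zero_le_one h2, min_le_left (1:ℝ) (dist y c / ε)]
  · intro y
    exact le_min zero_le_one (div_nonneg dist_nonneg hε.le)
  · intro y
    exact min_le_left _ _
  · show min 1 (dist c c / ε) = 0
    simp [hε.le]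
  · intro y hy
    exact min_eq_left ((one_le_div hε).mpr hy)

/-- If `H n (xs n) → 0` along every sequence `xs → x₀`, then `H n` is eventually
uniformly small near `x₀`. -/
lemma aux_claim {X : Type*} [MetricSpace X] (H : ℕ → X → ℝ) (x₀ : X)
    (hlim : ∀ xs : ℕ → X, Tendsto xs atTop (nhds x₀) →
      Tendsto (fun n => H n (xs n)) atTop (nhds 0))
    (η : ℝ) (hη : 0 < η) :
    ∃ δ > (0:ℝ), ∀ᶠ n in atTop, ∀ x, dist x x₀ < δ → H n x ≤ η := by
  by_contra h
  push_neg at h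
  have hfreq : ∀ k : ℕ, ∃ᶠ n in atTop, ∃ x, dist x x₀ < 1 / (k + 1) ∧ η < H n x := by
    intro k
    have hk : (0:ℝ) < 1 / (k + 1) := by positivity
    have := h (1 / (k + 1)) hk
    exact this
  obtain ⟨φ, hφ, hP⟩ := Filter.extraction_forall_of_frequently hfreq
  choose xk hxk hHxk using hP
  set xs : ℕ → X := Function.extend φ xk (fun _ => x₀) with hxs
  have hxsφ : ∀ k, xs (φ k) = xk k := fun k => hφ.injective.extend_apply _ _ _
  have htend : Tendsto xs atTop (nhds x₀) := by
    rw [Metric.tendsto_atTop]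
    intro ε hε
    obtain ⟨K, hK⟩ := exists_nat_one_div_lt hε
    refine ⟨φ K + 1, fun n hn => ?_⟩
    by_cases hex : ∃ k, φ k = n
    · obtain ⟨k, rfl⟩ := hex
      rw [hxsφ]
      have hkK : K < k := hφ.lt_iff_lt.mp (by omega)
      calc dist (xk k) x₀ < 1 / (k + 1) := hxk k
        _ ≤ 1 / (K + 1) := by
          apply one_div_le_one_div_of_le (by positivity)
          have : (K:ℝ) ≤ k := Nat.cast_le.mpr hkK.le
          linarith
        _ < ε := hK
    · rw [hxs, Function.extend_apply' _ _ _ hex]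
      simpa using hε
  have h0 : Tendsto (fun k => H (φ k) (xs (φ k))) atTop (nhds 0) :=
    (hlim xs htend).comp hφ.tendsto_atTop
  have hev := h0.eventually_lt_const hη
  obtain ⟨k, hk⟩ := hev.exists
  rw [hxsφ] at hk
  exact absurd (hHxk k) (not_lt.mpr hk.le)

/-- Conditional convergence lemma: let `𝕏₁, 𝕏₂` be Polish spaces,
`(X₁ n, X₂ n)` random elements of `𝕏₁ × 𝕏₂` and `ν n` a regular conditional distribution
of `X₂ n` given `X₁ n` (so that the joint law disintegrates as `law(X₁ n) ⊗ ν n`).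
If whenever `xs n → x` the measures `ν n (xs n)` converge weakly to the Dirac mass at
`G x` for a measurable `G`, and `X₁ n → x₀` in probability, then
`(X₁ n, X₂ n) → (x₀, G x₀)` in probability. -/
theorem tendstoInMeasure_pair_of_conditional
    {Ω 𝕏₁ 𝕏₂ : Type*} [MeasurableSpace Ω] (Pr : Measure Ω) [IsProbabilityMeasure Pr]
    [MetricSpace 𝕏₁] [CompleteSpace 𝕏₁] [TopologicalSpace.SeparableSpace 𝕏₁]
    [MeasurableSpace 𝕏₁] [BorelSpace 𝕏₁]
    [MetricSpace 𝕏₂] [CompleteSpace 𝕏₂] [TopologicalSpace.SeparableSpace 𝕏₂]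
    [MeasurableSpace 𝕏₂] [BorelSpace 𝕏₂]
    (X₁ : ℕ → Ω → 𝕏₁) (X₂ : ℕ → Ω → 𝕏₂)
    (hX₁ : ∀ n, Measurable (X₁ n)) (hX₂ : ∀ n, Measurable (X₂ n))
    (ν : ℕ → Kernel 𝕏₁ 𝕏₂) (hν : ∀ n, IsMarkovKernel (ν n))
    (hdisint : ∀ n, Measure.map (fun ω => (X₁ n ω, X₂ n ω)) Pr
      = (Measure.map (X₁ n) Pr).compProd (ν n))
    (G : 𝕏₁ → 𝕏₂) (hG : Measurable G)
    (hweak : ∀ (x : 𝕏₁) (xs : ℕ → 𝕏₁), Tendsto xs atTop (nhds x) →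
      ∀ f : BoundedContinuousFunction 𝕏₂ ℝ,
        Tendsto (fun n => ∫ y, f y ∂(ν n (xs n))) atTop (nhds (f (G x))))
    (x₀ : 𝕏₁) (hconv : TendstoInMeasure Pr X₁ atTop (fun _ => x₀)) :
    TendstoInMeasure Pr (fun n ω => (X₁ n ω, X₂ n ω)) atTop (fun _ => (x₀, G x₀)) := by
  rw [tendstoInMeasure_iff_dist] at hconv ⊢
  intro ε hε
  haveI : ∀ n, IsMarkovKernel (ν n) := hν
  -- Step 1: reduce to convergence of the second coordinate
  have hB : Tendsto (fun n => Pr {ω | ε ≤ dist (X₂ n ω) (G x₀)}) atTop (nhds 0) := by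
    obtain ⟨g, hg0, hg1, hgc, hgF⟩ := exists_aux_bcf (G x₀) ε hε
    set F : Set 𝕏₂ := {y | ε ≤ dist y (G x₀)} with hF
    have hFmeas : MeasurableSet F :=
      (isClosed_le continuous_const (continuous_id.dist continuous_const)).measurableSet
    -- indicator bound
    have h2 : ∀ n x, (ν n x F).toReal ≤ ∫ y, g y ∂(ν n x) := by
      intro n x
      have hind : (ν n x F).toReal = ∫ y, F.indicator (fun _ => (1:ℝ)) y ∂(ν n x) := by
        rw [integral_indicator_const _ hFmeas]; simp [Measure.real]
      rw [hind]
      refine integral_mono ((integrable_const (1:ℝ)).indicator hFmeas)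
        (g.integrable _) (fun y => ?_)
      by_cases hy : y ∈ F
      · simp only [Set.indicator_of_mem hy]
        exact (hgF y hy).ge
      · simp only [Set.indicator_of_notMem hy]
        exact hg0 y
    -- uniform smallness of H near x₀
    set H : ℕ → 𝕏₁ → ℝ := fun n x => ∫ y, g y ∂(ν n x) with hHdef
    have hlim : ∀ xs : ℕ → 𝕏₁, Tendsto xs atTop (nhds x₀) →
        Tendsto (fun n => H n (xs n)) atTop (nhds 0) := by
      intro xs hxs
      have := hweak x₀ xs hxs g
      rwa [hgc] at this
    rw [ENNReal.tendsto_atTop_zero]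
    intro ε' hε'
    by_cases hεtop : ε' = ⊤
    · exact ⟨0, fun n _ => hεtop ▸ le_top⟩
    have hε2 : (0:ℝ≥0∞) < ε' / 2 := ENNReal.div_pos hε'.ne' (by norm_num)
    set η : ℝ := (min 1 (ε' / 2)).toReal with hηdef
    have hηpos : 0 < η := ENNReal.toReal_pos (by positivity) (ne_top_of_le_ne_top
      (by norm_num) (min_le_left _ _))
    have hηle : ENNReal.ofReal η ≤ ε' / 2 := by
      rw [hηdef, ENNReal.ofReal_toReal (ne_top_of_le_ne_top (by norm_num) (min_le_left _ _))]
      exact min_le_right _ _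
    obtain ⟨δ, hδ, hev⟩ := aux_claim H x₀ hlim η hηpos
    obtain ⟨N₁, hN₁⟩ := eventually_atTop.mp hev
    obtain ⟨N₂, hN₂⟩ := ENNReal.tendsto_atTop_zero.mp (hconv δ hδ) (ε' / 2) hε2
    refine ⟨max N₁ N₂, fun n hn => ?_⟩
    haveI : IsProbabilityMeasure (Measure.map (X₁ n) Pr) :=
      Measure.isProbabilityMeasure_map (hX₁ n).aemeasurable
    -- rewrite via disintegration
    have key : Pr {ω | ε ≤ dist (X₂ n ω) (G x₀)}
        = ∫⁻ x, ν n x F ∂(Measure.map (X₁ n) Pr) := by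
      have hpair : Measurable (fun ω => (X₁ n ω, X₂ n ω)) := (hX₁ n).prodMk (hX₂ n)
      have : Pr {ω | ε ≤ dist (X₂ n ω) (G x₀)}
          = Measure.map (fun ω => (X₁ n ω, X₂ n ω)) Pr (Set.univ ×ˢ F) := by
        rw [Measure.map_apply hpair (MeasurableSet.univ.prod hFmeas)]
        congr 1
        ext ω
        simp [hF]
      rw [this, hdisint n, Measure.compProd_apply (MeasurableSet.univ.prod hFmeas)]
      simp
    rw [key]
    have hball : MeasurableSet (Metric.ball x₀ δ) := Metric.isOpen_ball.measurableSet
    rw [← lintegral_add_compl (fun x => ν n x F) hball]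
    have hle1 : ∫⁻ x in Metric.ball x₀ δ, ν n x F ∂(Measure.map (X₁ n) Pr) ≤ ε' / 2 := by
      calc ∫⁻ x in Metric.ball x₀ δ, ν n x F ∂(Measure.map (X₁ n) Pr)
          ≤ ∫⁻ _ in Metric.ball x₀ δ, ENNReal.ofReal η ∂(Measure.map (X₁ n) Pr) := by
            refine setLIntegral_mono measurable_const (fun x hx => ?_)
            have hHx : H n x ≤ η := hN₁ n (le_trans (le_max_left _ _) hn) x
              (Metric.mem_ball.mp hx)
            calc ν n x F = ENNReal.ofReal (ν n x F).toReal := by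
                  rw [ENNReal.ofReal_toReal (measure_ne_top _ _)]
              _ ≤ ENNReal.ofReal η := ENNReal.ofReal_le_ofReal ((h2 n x).trans hHx)
        _ = ENNReal.ofReal η * (Measure.map (X₁ n) Pr) (Metric.ball x₀ δ) :=
            setLIntegral_const _ _
        _ ≤ ENNReal.ofReal η * 1 := by
            exact mul_le_mul_right prob_le_one _
        _ ≤ ε' / 2 := by rw [mul_one]; exact hηle
    have hle2 : ∫⁻ x in (Metric.ball x₀ δ)ᶜ, ν n x F ∂(Measure.map (X₁ n) Pr) ≤ ε' / 2 := by
      calc ∫⁻ x in (Metric.ball x₀ δ)ᶜ, ν n x F ∂(Measure.map (X₁ n) Pr)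
          ≤ ∫⁻ _ in (Metric.ball x₀ δ)ᶜ, 1 ∂(Measure.map (X₁ n) Pr) :=
            setLIntegral_mono measurable_const (fun x _ => prob_le_one)
        _ = (Measure.map (X₁ n) Pr) (Metric.ball x₀ δ)ᶜ := by
            rw [setLIntegral_const, one_mul]
        _ = Pr {ω | δ ≤ dist (X₁ n ω) x₀} := by
            rw [Measure.map_apply (hX₁ n) hball.compl]
            congr 1
            ext ω
            simp [Metric.mem_ball, not_lt]
        _ ≤ ε' / 2 := hN₂ n (le_trans (le_max_right _ _) hn)
    calc _ ≤ ε' / 2 + ε' / 2 := add_le_add hle1 hle2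
      _ = ε' := ENNReal.add_halves _
  -- Step 2: combine
  have hA := hconv ε hε
  have hbound : ∀ n, Pr {ω | ε ≤ dist ((X₁ n ω, X₂ n ω)) ((x₀, G x₀))}
      ≤ Pr {ω | ε ≤ dist (X₁ n ω) x₀} + Pr {ω | ε ≤ dist (X₂ n ω) (G x₀)} := by
    intro n
    refine le_trans (measure_mono ?_) (measure_union_le _ _)
    intro ω hω
    simp only [Set.mem_setOf_eq, Prod.dist_eq, le_max_iff] at hω
    simpa [Set.mem_union, Set.mem_setOf_eq] using hω
  have hsum : Tendsto (fun n => Pr {ω | ε ≤ dist (X₁ n ω) x₀}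
      + Pr {ω | ε ≤ dist (X₂ n ω) (G x₀)}) atTop (nhds 0) := by
    have := hA.add hB
    simpa using this
  exact tendsto_of_tendsto_of_tendsto_of_le_of_le tendsto_const_nhds hsum
    (fun n => zero_le) hbound
end
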